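/- arXiv:1901.11452 — 4 statements merged into one kernel-verified Lean document; each statement's English description precedes it below -/
import Mathlib

section
/- Let K ≥ 1 and let θ_1, ..., θ_K be real numbers (directions of arrival) such that the real numbers 1, cos(θ_1), ..., cos(θ_K) are linearly independent over ℚ. Fix an index i ∈ {1, ..., K}. Then for every δ > 0 there exists a positive integer d such that the two-antenna array power gain g(θ; d) := (1 + cos(2π·d·cos θ))/2 satisfies g(θ_i; d) > 1 − δ and g(θ_k; d) < δ for every k ≠ i. -/
open Finset Complex Filter
open scoped Topology

/-! ### Auxiliary machinery: characters `ee x = exp (x * I)` and Weyl-type sums -/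

noncomputable def ee (x : ℝ) : ℂ := Complex.exp (x * Complex.I)

lemma ee_zero : ee 0 = 1 := by simp [ee]

lemma ee_mul (x y : ℝ) : ee x * ee y = ee (x + y) := by
  rw [ee, ee, ee, ← Complex.exp_add]; push_cast; ring_nf

lemma ee_pow (x : ℝ) (n : ℕ) : ee x ^ n = ee (n * x) := by
  rw [ee, ee, ← Complex.exp_nat_mul]; push_cast; ring_nf

lemma ee_sum {ι : Type*} (s : Finset ι) (f : ι → ℝ) :
    ∏ k ∈ s, ee (f k) = ee (∑ k ∈ s, f k) := by
  simp only [ee]; rw [← Complex.exp_sum]; congr 1; push_cast; rw [Finset.sum_mul]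

lemma conj_ee (x : ℝ) : (starRingEnd ℂ) (ee x) = ee (-x) := by
  rw [ee, ← Complex.exp_conj]; congr 1; simp [Complex.conj_ofReal]

lemma norm_ee (x : ℝ) : ‖ee x‖ = 1 := by
  rw [ee, Complex.norm_exp_ofReal_mul_I]

lemma normSq_one_add (s x : ℝ) (hs : s ^ 2 = 1) :
    Complex.normSq (1 + (s : ℂ) * ee x) = 2 * (1 + s * Real.cos x) := by
  rw [Complex.normSq_apply]
  have h1 : (1 + (s : ℂ) * ee x).re = 1 + s * Real.cos x := by
    simp [ee, Complex.add_re, Complex.mul_re, Complex.exp_ofReal_mul_I_re,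
      Complex.exp_ofReal_mul_I_im]
  have h2 : (1 + (s : ℂ) * ee x).im = s * Real.sin x := by
    simp [ee, Complex.add_im, Complex.mul_im, Complex.exp_ofReal_mul_I_re,
      Complex.exp_ofReal_mul_I_im]
  rw [h1, h2]
  nlinarith [Real.sin_sq_add_cos_sq x]

lemma cesaro (z : ℂ) (h1 : ‖z‖ = 1) (hz : z ≠ 1) (N : ℕ) :
    ‖∑ n ∈ range N, z ^ (n + 1)‖ ≤ 2 / ‖z - 1‖ := by
  have hsum : ∑ n ∈ range N, z ^ (n + 1) = z * ((z ^ N - 1) / (z - 1)) := by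
    rw [← geom_sum_eq hz, Finset.mul_sum]
    exact Finset.sum_congr rfl fun n _ => by ring
  rw [hsum, norm_mul, h1, one_mul, norm_div]
  have hb : ‖z ^ N - 1‖ ≤ 2 := by
    calc ‖z ^ N - 1‖ ≤ ‖z ^ N‖ + ‖(1 : ℂ)‖ := norm_sub_le _ _
    _ = 2 := by rw [norm_pow, h1]; norm_num
  have hpos : 0 < ‖z - 1‖ := by
    rw [norm_pos_iff]; exact sub_ne_zero.mpr hz
  gcongr

/-- Expansion of the product of binomial powers into a trigonometric polynomial. -/
lemma expand_prod (K M : ℕ) (α s : Fin K → ℝ) (d : ℕ) :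
    ∏ k, (1 + (s k : ℂ) * ee (2 * Real.pi * d * α k)) ^ M
      = ∑ j ∈ Fintype.piFinset (fun _ : Fin K => range (M + 1)),
          ((∏ k, (Nat.choose M (j k) : ℝ) * (s k) ^ (j k) : ℝ) : ℂ)
            * ee (2 * Real.pi * d * (∑ k, (j k : ℝ) * α k)) := by
  have hone : ∀ k : Fin K, (1 + (s k : ℂ) * ee (2 * Real.pi * d * α k)) ^ M
      = ∑ j ∈ range (M + 1),
          (((Nat.choose M j : ℝ) * (s k) ^ j : ℝ) : ℂ) * ee ((j : ℝ) * (2 * Real.pi * d * α k)) := by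
    intro k
    rw [add_comm (1 : ℂ), add_pow]
    refine Finset.sum_congr rfl fun j hj => ?_
    rw [mul_pow, ee_pow, one_pow, mul_one]
    push_cast
    ring
  calc ∏ k, (1 + (s k : ℂ) * ee (2 * Real.pi * d * α k)) ^ M
      = ∏ k, ∑ j ∈ range (M + 1),
          (((Nat.choose M j : ℝ) * (s k) ^ j : ℝ) : ℂ) * ee ((j : ℝ) * (2 * Real.pi * d * α k)) :=
        Finset.prod_congr rfl fun k _ => hone k
    _ = ∑ j ∈ Fintype.piFinset (fun _ : Fin K => range (M + 1)),
          ∏ k, (((Nat.choose M (j k) : ℝ) * (s k) ^ (j k) : ℝ) : ℂ)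
            * ee ((j k : ℝ) * (2 * Real.pi * d * α k)) := by
        rw [Finset.prod_univ_sum]
    _ = _ := by
        refine Finset.sum_congr rfl fun j _ => ?_
        rw [Finset.prod_mul_distrib, ee_sum]
        congr 1
        · push_cast
          ring
        · congr 1
          rw [Finset.mul_sum]
          exact Finset.sum_congr rfl fun k _ => by ring

/-- Lower bound on the sum of squared coefficients, via Cauchy–Schwarz. -/
lemma coeff_lower (K M : ℕ) (s : Fin K → ℝ) (hsabs : ∀ k, |s k| = 1) :
    4 ^ (M * K) / ((M : ℝ) + 1) ^ K
      ≤ ∑ j ∈ Fintype.piFinset (fun _ : Fin K => range (M + 1)),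
          (∏ k, (Nat.choose M (j k) : ℝ) * (s k) ^ (j k)) ^ 2 := by
  set J := Fintype.piFinset (fun _ : Fin K => range (M + 1)) with hJ
  set c : (Fin K → ℕ) → ℝ := fun j => ∏ k, (Nat.choose M (j k) : ℝ) * (s k) ^ (j k) with hc
  have habs : ∀ j, |c j| = ∏ k, (Nat.choose M (j k) : ℝ) := by
    intro j
    rw [hc, Finset.abs_prod]
    refine Finset.prod_congr rfl fun k _ => ?_
    rw [abs_mul, _root_.abs_pow, hsabs, one_pow, mul_one, Nat.abs_cast]
  have h1 : ∑ j ∈ J, |c j| = 2 ^ (M * K) := by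
    calc ∑ j ∈ J, |c j| = ∑ j ∈ J, ∏ k, (Nat.choose M (j k) : ℝ) :=
          Finset.sum_congr rfl fun j _ => habs j
    _ = ∏ _k : Fin K, ∑ j ∈ range (M + 1), (Nat.choose M j : ℝ) := by
          rw [Finset.prod_univ_sum]
    _ = 2 ^ (M * K) := by
          have h2 : ∑ j ∈ range (M + 1), (Nat.choose M j : ℝ) = 2 ^ M := by
            rw [← Nat.cast_sum, Nat.sum_range_choose]
            push_cast; ring
          rw [Finset.prod_congr rfl fun k _ => h2, Finset.prod_const, Finset.card_univ,
            Fintype.card_fin, ← pow_mul]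
  have hcardJ : (#J : ℝ) = ((M : ℝ) + 1) ^ K := by
    rw [hJ, Fintype.card_piFinset]
    simp
  have hCS := sq_sum_le_card_mul_sum_sq (s := J) (f := fun j => |c j|)
  rw [h1] at hCS
  have h3 : ∑ j ∈ J, |c j| ^ 2 = ∑ j ∈ J, (c j) ^ 2 :=
    Finset.sum_congr rfl fun j _ => sq_abs _
  rw [h3, hcardJ] at hCS
  have hpos : (0:ℝ) < ((M : ℝ) + 1) ^ K := by positivity
  rw [div_le_iff₀ hpos]
  calc (4:ℝ) ^ (M * K) = (2 ^ (M * K)) ^ 2 := by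
        rw [sq, ← mul_pow]
        norm_num
  _ ≤ (((M:ℝ) + 1) ^ K) * ∑ j ∈ J, (c j) ^ 2 := hCS
  _ = (∑ j ∈ J, (c j) ^ 2) * ((M:ℝ) + 1) ^ K := by ring

/-- Rational independence implies the relevant characters are nontrivial. -/
lemma key_ne_one (K : ℕ) (α : Fin K → ℝ)
    (hind : ∀ (q₀ : ℚ) (q : Fin K → ℚ),
      (q₀ : ℝ) + ∑ k, (q k : ℝ) * α k = 0 → q₀ = 0 ∧ ∀ k, q k = 0)
    (j j' : Fin K → ℕ) (hne : j ≠ j') :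
    ee (2 * Real.pi * ((∑ k, (j k : ℝ) * α k) - ∑ k, (j' k : ℝ) * α k)) ≠ 1 := by
  intro h1
  rw [ee, Complex.exp_eq_one_iff] at h1
  obtain ⟨n, hn⟩ := h1
  set β : ℝ := (∑ k, (j k : ℝ) * α k) - ∑ k, (j' k : ℝ) * α k with hβdef
  have hC : ((2 * Real.pi * β : ℝ) : ℂ) = (n : ℂ) * (2 * Real.pi) := by
    have hI : ((2 * Real.pi * β : ℝ) : ℂ) * I = ((n : ℂ) * (2 * Real.pi)) * I := by
      rw [hn]; ring
    exact mul_right_cancel₀ Complex.I_ne_zero hI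
  have hR : 2 * Real.pi * β = (n : ℝ) * (2 * Real.pi) := by exact_mod_cast hC
  have hβ : β = (n : ℝ) := by
    have hπ : (2 : ℝ) * Real.pi ≠ 0 := by positivity
    have : (2 * Real.pi) * β = (2 * Real.pi) * (n : ℝ) := by linarith [hR]
    exact mul_left_cancel₀ hπ this
  obtain ⟨-, h2⟩ := hind (-(n : ℚ)) (fun k => (j k : ℚ) - (j' k : ℚ)) (by
    push_cast
    have : ∑ k, ((j k : ℝ) - (j' k : ℝ)) * α k = β := by
      rw [hβdef, ← Finset.sum_sub_distrib]
      exact Finset.sum_congr rfl fun k _ => by ring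
    rw [this, hβ]
    ring)
  apply hne
  funext k
  have h3 := h2 k
  have : (j k : ℚ) = (j' k : ℚ) := by linarith
  exact_mod_cast this

/-- Splitting an averaged squared character sum into diagonal and off-diagonal parts. -/
lemma main_split {KJ : Type*} [DecidableEq KJ] (J : Finset KJ) (c : KJ → ℝ) (B : KJ → ℝ)
    (hkey : ∀ j ∈ J, ∀ j' ∈ J, j ≠ j' → ee (2 * Real.pi * (B j - B j')) ≠ 1) (N : ℕ) :
    ∃ E : ℂ, ∑ n ∈ range N,
        ((∑ j ∈ J, (c j : ℂ) * ee (2 * Real.pi * ((n : ℕ) + 1 : ℕ) * B j)) *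
          (starRingEnd ℂ) (∑ j ∈ J, (c j : ℂ) * ee (2 * Real.pi * ((n : ℕ) + 1 : ℕ) * B j)))
      = (N : ℂ) * ((∑ j ∈ J, (c j) ^ 2 : ℝ) : ℂ) + E ∧
      ‖E‖ ≤ ∑ j ∈ J, ∑ j' ∈ J.erase j,
        |c j * c j'| * (2 / ‖ee (2 * Real.pi * (B j - B j')) - 1‖) := by
  set z : KJ → KJ → ℂ := fun j j' => ee (2 * Real.pi * (B j - B j')) with hz
  have hper : ∀ n : ℕ,
      ((∑ j ∈ J, (c j : ℂ) * ee (2 * Real.pi * ((n : ℕ) + 1 : ℕ) * B j)) *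
        (starRingEnd ℂ) (∑ j ∈ J, (c j : ℂ) * ee (2 * Real.pi * ((n : ℕ) + 1 : ℕ) * B j)))
      = ∑ j ∈ J, ∑ j' ∈ J, ((c j * c j' : ℝ) : ℂ) * (z j j') ^ (n + 1) := by
    intro n
    rw [map_sum, Finset.sum_mul_sum]
    refine Finset.sum_congr rfl fun j _ => Finset.sum_congr rfl fun j' _ => ?_
    rw [map_mul, conj_ee, Complex.conj_ofReal]
    have h1 : (z j j') ^ (n + 1) = ee (((n : ℕ) + 1 : ℕ) * (2 * Real.pi * (B j - B j'))) := by
      rw [hz, ee_pow]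
    have h2 : ee (2 * Real.pi * ((n : ℕ) + 1 : ℕ) * B j)
          * ee (-(2 * Real.pi * ((n : ℕ) + 1 : ℕ) * B j'))
        = ee (((n : ℕ) + 1 : ℕ) * (2 * Real.pi * (B j - B j'))) := by
      rw [ee_mul]
      congr 1
      push_cast
      ring
    rw [h1, ← h2]
    push_cast
    ring
  have hswap : ∑ n ∈ range N,
      ((∑ j ∈ J, (c j : ℂ) * ee (2 * Real.pi * ((n : ℕ) + 1 : ℕ) * B j)) *
        (starRingEnd ℂ) (∑ j ∈ J, (c j : ℂ) * ee (2 * Real.pi * ((n : ℕ) + 1 : ℕ) * B j)))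
      = ∑ j ∈ J, ∑ j' ∈ J, ((c j * c j' : ℝ) : ℂ) * ∑ n ∈ range N, (z j j') ^ (n + 1) := by
    rw [Finset.sum_congr rfl fun n _ => hper n, Finset.sum_comm]
    refine Finset.sum_congr rfl fun j _ => ?_
    rw [Finset.sum_comm]
    refine Finset.sum_congr rfl fun j' _ => ?_
    rw [Finset.mul_sum]
  refine ⟨∑ j ∈ J, ∑ j' ∈ J.erase j, ((c j * c j' : ℝ) : ℂ) * ∑ n ∈ range N, (z j j') ^ (n + 1),
    ?_, ?_⟩
  · rw [hswap]
    have hdiag : ∀ j ∈ J, ∑ j' ∈ J, ((c j * c j' : ℝ) : ℂ) * ∑ n ∈ range N, (z j j') ^ (n + 1)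
        = ((c j) ^ 2 : ℝ) * (N : ℂ)
          + ∑ j' ∈ J.erase j, ((c j * c j' : ℝ) : ℂ) * ∑ n ∈ range N, (z j j') ^ (n + 1) := by
      intro j hj
      rw [← Finset.add_sum_erase _ _ hj]
      congr 1
      have hz1 : z j j = 1 := by rw [hz]; simp [ee_zero]
      rw [hz1]
      simp only [one_pow, Finset.sum_const, Finset.card_range, nsmul_eq_mul, mul_one]
      push_cast
      ring
    rw [Finset.sum_congr rfl hdiag, Finset.sum_add_distrib]
    congr 1
    rw [← Finset.sum_mul]
    push_cast
    ring
  · refine (norm_sum_le _ _).trans ?_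
    refine Finset.sum_le_sum fun j hj => ?_
    refine (norm_sum_le _ _).trans ?_
    refine Finset.sum_le_sum fun j' hj' => ?_
    rw [norm_mul, Complex.norm_real]
    have hne : j ≠ j' := (Finset.ne_of_mem_erase hj').symm
    have := cesaro (z j j') (norm_ee _) (hkey j hj j' (Finset.mem_of_mem_erase hj') hne) N
    calc ‖(c j * c j' : ℝ)‖ * ‖∑ n ∈ range N, (z j j') ^ (n + 1)‖
        ≤ |c j * c j'| * (2 / ‖z j j' - 1‖) := by
          rw [Real.norm_eq_abs]
          exact mul_le_mul_of_nonneg_left this (abs_nonneg _)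
    _ = |c j * c j'| * (2 / ‖ee (2 * Real.pi * (B j - B j')) - 1‖) := by rw [hz]

/-- Two-antenna array power gain toward a far-field source at angle `θ`,
for antenna separation `d` wavelengths and beamforming vector `(1,1)/√2`. -/
noncomputable def arrayGain (θ : ℝ) (d : ℕ) : ℝ :=
  (1 + Real.cos (2 * Real.pi * d * Real.cos θ)) / 2

/-- **Ergodic nulling (main theorem).** If `1, cos θ₁, …, cos θ_K` are linearly
independent over `ℚ`, then for every `δ > 0` there is a positive integer
antenna separation `d` such that the gain toward the desired direction `θ i`
exceeds `1 - δ` while the gain toward every interfering direction `θ k`, `k ≠ i`,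
is below `δ`. -/
theorem ergodic_nulling (K : ℕ) (hK : 1 ≤ K) (θ : Fin K → ℝ)
    (hind : ∀ (q₀ : ℚ) (q : Fin K → ℚ),
      (q₀ : ℝ) + ∑ k, (q k : ℝ) * Real.cos (θ k) = 0 → q₀ = 0 ∧ ∀ k, q k = 0)
    (i : Fin K) :
    ∀ δ : ℝ, 0 < δ → ∃ d : ℕ, 0 < d ∧
      arrayGain (θ i) d > 1 - δ ∧
      ∀ k : Fin K, k ≠ i → arrayGain (θ k) d < δ := by
  suffices H : ∀ δ : ℝ, 0 < δ → δ ≤ 1/2 → ∃ d : ℕ, 0 < d ∧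
      arrayGain (θ i) d > 1 - δ ∧ ∀ k : Fin K, k ≠ i → arrayGain (θ k) d < δ by
    intro δ hδ
    obtain ⟨d, hd, h1, h2⟩ := H (min δ (1/2)) (lt_min hδ (by norm_num)) (min_le_right _ _)
    have hm : min δ (1/2) ≤ δ := min_le_left _ _
    exact ⟨d, hd, by linarith, fun k hk => lt_of_lt_of_le (h2 k hk) hm⟩
  intro δ hδ hδ2
  set α : Fin K → ℝ := fun k => Real.cos (θ k) with hα
  set s : Fin K → ℝ := fun k => if k = i then 1 else -1 with hs
  have hs2 : ∀ k, (s k) ^ 2 = 1 := by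
    intro k; by_cases h : k = i <;> simp [hs, h]
  have hsabs : ∀ k, |s k| = 1 := by
    intro k; by_cases h : k = i <;> simp [hs, h]
  set g : Fin K → ℕ → ℝ := fun k d => (1 + s k * Real.cos (2 * Real.pi * d * α k)) / 2 with hg
  have hg0 : ∀ k d, 0 ≤ g k d := by
    intro k d
    have h1 : |s k * Real.cos (2 * Real.pi * d * α k)| ≤ 1 := by
      rw [abs_mul, hsabs, one_mul]; exact Real.abs_cos_le_one _
    have := abs_le.mp h1
    simp only [hg]; linarith [this.1]
  have hg1 : ∀ k d, g k d ≤ 1 := by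
    intro k d
    have h1 : |s k * Real.cos (2 * Real.pi * d * α k)| ≤ 1 := by
      rw [abs_mul, hsabs, one_mul]; exact Real.abs_cos_le_one _
    have := abs_le.mp h1
    simp only [hg]; linarith [this.2]
  have hgi : ∀ d, g i d = arrayGain (θ i) d := by
    intro d; simp [hg, hs, arrayGain, hα]
  have hgk : ∀ k, k ≠ i → ∀ d : ℕ, g k d = 1 - arrayGain (θ k) d := by
    intro k hk d; simp [hg, hs, hk, arrayGain, hα]; ring
  -- choose the power M
  obtain ⟨M, hM1, hM⟩ : ∃ M : ℕ, 1 ≤ M ∧ ((M : ℝ) + 1) ^ K * (1 - δ) ^ M < 1 := by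
    have hr0 : (0:ℝ) ≤ 1 - δ := by linarith
    have hr1 : 1 - δ < 1 := by linarith
    have t1 := tendsto_pow_const_mul_const_pow_of_lt_one K hr0 hr1
    have t2 : Tendsto (fun n : ℕ => ((n : ℝ) + 1) ^ K * (1 - δ) ^ (n + 1)) atTop (𝓝 0) := by
      have := t1.comp (tendsto_add_atTop_nat 1)
      refine this.congr fun n => ?_
      simp [Function.comp]
    have t3 : Tendsto (fun n : ℕ => ((n : ℝ) + 1) ^ K * (1 - δ) ^ n) atTop (𝓝 0) := by
      have t4 := t2.mul_const (1 - δ)⁻¹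
      rw [zero_mul] at t4
      refine t4.congr fun n => ?_
      rw [pow_succ]
      have hrpos : (0:ℝ) < 1 - δ := by linarith
      field_simp
    have := (t3.eventually (eventually_lt_nhds zero_lt_one)).and (eventually_ge_atTop 1)
    obtain ⟨M, hM⟩ := this.exists
    exact ⟨M, hM.2, hM.1⟩
  -- the coefficient setup
  set J : Finset (Fin K → ℕ) := Fintype.piFinset (fun _ : Fin K => range (M + 1)) with hJ
  set c : (Fin K → ℕ) → ℝ := fun j => ∏ k, (Nat.choose M (j k) : ℝ) * (s k) ^ (j k) with hc
  set B : (Fin K → ℕ) → ℝ := fun j => ∑ k, (j k : ℝ) * α k with hB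
  set C₀ : ℝ := ∑ j ∈ J, (c j) ^ 2 with hC₀
  have hC₀ge : 4 ^ (M * K) / ((M : ℝ) + 1) ^ K ≤ C₀ := coeff_lower K M s hsabs
  have hkey : ∀ j ∈ J, ∀ j' ∈ J, j ≠ j' → ee (2 * Real.pi * (B j - B j')) ≠ 1 := by
    intro j _ j' _ hne
    exact key_ne_one K α hind j j' hne
  -- the positivity gap
  have h4pos : (0:ℝ) < 4 ^ (M * K) := by positivity
  have hgap : 0 < C₀ - 4 ^ (M * K) * (1 - δ) ^ M := by
    have hMpos : (0:ℝ) < ((M : ℝ) + 1) ^ K := by positivity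
    have hlt : 4 ^ (M * K) * (1 - δ) ^ M < 4 ^ (M * K) / ((M : ℝ) + 1) ^ K := by
      rw [lt_div_iff₀ hMpos]
      calc 4 ^ (M * K) * (1 - δ) ^ M * ((M : ℝ) + 1) ^ K
          = 4 ^ (M * K) * (((M : ℝ) + 1) ^ K * (1 - δ) ^ M) := by ring
      _ < 4 ^ (M * K) * 1 := by
          exact mul_lt_mul_of_pos_left hM h4pos
      _ = 4 ^ (M * K) := by ring
    linarith
  -- the error budget and choice of N
  set err : ℝ := ∑ j ∈ J, ∑ j' ∈ J.erase j,
      |c j * c j'| * (2 / ‖ee (2 * Real.pi * (B j - B j')) - 1‖) with herr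
  have herr0 : 0 ≤ err := by
    apply Finset.sum_nonneg; intro j _
    apply Finset.sum_nonneg; intro j' _
    positivity
  obtain ⟨N, hN⟩ := exists_nat_gt (err / (C₀ - 4 ^ (M * K) * (1 - δ) ^ M))
  have hNgap : err < (N : ℝ) * (C₀ - 4 ^ (M * K) * (1 - δ) ^ M) := by
    rw [div_lt_iff₀ hgap] at hN
    linarith
  -- contradiction
  by_contra hcon
  push_neg at hcon
  have hbad : ∀ d : ℕ, 0 < d → ∏ k, (g k d) ^ M ≤ (1 - δ) ^ M := by
    intro d hd
    have hex : ∃ k₀, g k₀ d ≤ 1 - δ := by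
      by_cases h : 1 - δ < arrayGain (θ i) d
      · obtain ⟨k, hk, hk2⟩ := hcon d hd h
        exact ⟨k, by rw [hgk k hk d]; linarith⟩
      · exact ⟨i, by rw [hgi d]; linarith⟩
    obtain ⟨k₀, hk₀⟩ := hex
    calc ∏ k, (g k d) ^ M ≤ ∏ k, (if k = k₀ then (1 - δ) ^ M else 1) := by
          apply Finset.prod_le_prod (fun k _ => pow_nonneg (hg0 k d) M)
          intro k _
          by_cases h : k = k₀
          · subst h
            simp only [if_pos rfl]
            exact pow_le_pow_left₀ (hg0 k d) hk₀ M
          · simp only [if_neg h]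
            exact pow_le_one₀ (hg0 k d) (hg1 k d)
      _ = (1 - δ) ^ M := by
          rw [Finset.prod_ite_eq' Finset.univ k₀ (fun _ => (1 - δ) ^ M)]
          simp
  -- the spectral identity
  obtain ⟨E, hEeq, hEle⟩ := main_split J c B hkey N
  have hψ : ∀ n : ℕ, (∑ j ∈ J, (c j : ℂ) * ee (2 * Real.pi * ((n : ℕ) + 1 : ℕ) * B j))
      = ∏ k, (1 + (s k : ℂ) * ee (2 * Real.pi * ((n + 1 : ℕ) : ℝ) * α k)) ^ M := by
    intro n
    rw [expand_prod K M α s (n + 1)]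
  have hterm : ∀ n : ℕ,
      ((∑ j ∈ J, (c j : ℂ) * ee (2 * Real.pi * ((n : ℕ) + 1 : ℕ) * B j)) *
        (starRingEnd ℂ) (∑ j ∈ J, (c j : ℂ) * ee (2 * Real.pi * ((n : ℕ) + 1 : ℕ) * B j)))
      = ((4 ^ (M * K) * ∏ k, (g k (n + 1)) ^ M : ℝ) : ℂ) := by
    intro n
    rw [hψ n, Complex.mul_conj]
    congr 1
    rw [map_prod Complex.normSq]
    have hfac : ∀ k : Fin K, Complex.normSq ((1 + (s k : ℂ)
        * ee (2 * Real.pi * ((n + 1 : ℕ) : ℝ) * α k)) ^ M) = (4 * g k (n + 1)) ^ M := by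
      intro k
      rw [map_pow, normSq_one_add (s k) _ (hs2 k)]
      congr 1
      rw [hg]
      ring
    rw [Finset.prod_congr rfl fun k _ => hfac k]
    calc ∏ k : Fin K, (4 * g k (n + 1)) ^ M
        = ∏ k : Fin K, (4 ^ M * (g k (n + 1)) ^ M) :=
          Finset.prod_congr rfl fun k _ => by rw [mul_pow]
    _ = (4 ^ M) ^ K * ∏ k, (g k (n + 1)) ^ M := by
          rw [Finset.prod_mul_distrib, Finset.prod_const, Finset.card_univ, Fintype.card_fin]
    _ = 4 ^ (M * K) * ∏ k, (g k (n + 1)) ^ M := by rw [← pow_mul]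
  -- take real parts and conclude
  rw [Finset.sum_congr rfl fun n _ => hterm n] at hEeq
  set Sr : ℝ := ∑ n ∈ range N, (4 ^ (M * K) * ∏ k, (g k (n + 1)) ^ M) with hSr
  have hcast : (Sr : ℂ) = ∑ n ∈ range N, ((4 ^ (M * K) * ∏ k, (g k (n + 1)) ^ M : ℝ) : ℂ) := by
    rw [hSr]
    push_cast
    rfl
  have hEq2 : (Sr : ℂ) = ((N * C₀ : ℝ) : ℂ) + E := by
    rw [hcast, hEeq, hC₀]
    congr 1
    push_cast
    ring
  have hre : Sr = N * C₀ + E.re := by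
    have := congrArg Complex.re hEq2
    simpa [Complex.add_re, Complex.ofReal_re] using this
  have hEre : -err ≤ E.re := by
    have h1 : |E.re| ≤ ‖E‖ := Complex.abs_re_le_norm E
    have h2 : ‖E‖ = ‖E‖ := rfl
    have h3 := neg_abs_le E.re
    rw [← herr] at hEle
    rw [h2] at h1
    linarith
  have hSrle : Sr ≤ (N : ℝ) * (4 ^ (M * K) * (1 - δ) ^ M) := by
    rw [hSr]
    calc ∑ n ∈ range N, (4 ^ (M * K) * ∏ k, (g k (n + 1)) ^ M)
        ≤ ∑ _n ∈ range N, (4 ^ (M * K) * (1 - δ) ^ M) := by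
          refine Finset.sum_le_sum fun n _ => ?_
          exact mul_le_mul_of_nonneg_left (hbad (n + 1) (Nat.succ_pos n)) (le_of_lt h4pos)
    _ = (N : ℝ) * (4 ^ (M * K) * (1 - δ) ^ M) := by
          rw [Finset.sum_const, Finset.card_range, nsmul_eq_mul]
  have hexpand : (N : ℝ) * (C₀ - 4 ^ (M * K) * (1 - δ) ^ M)
      = N * C₀ - N * (4 ^ (M * K) * (1 - δ) ^ M) := by ring
  linarith
end

section
/- Let x_1, ..., x_K be real numbers such that 1, x_1, ..., x_K are linearly independent over ℚ. Then the set of points {(fract(m·x_1), ..., fract(m·x_K)) : m a positive integer} is dense in [0,1]^K. -/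
open Module

lemma line_mem_of_not_discrete {E : Type} [NormedAddCommGroup E] [NormedSpace ℝ E]
    [FiniteDimensional ℝ E] (H : AddSubgroup E) (hc : IsClosed (H : Set E))
    (hnd : ∀ ε > 0, ∃ h ∈ H, h ≠ 0 ∧ ‖h‖ < ε) :
    ∃ v : E, v ≠ 0 ∧ ∀ t : ℝ, t • v ∈ H := by
  have hex : ∀ n : ℕ, ∃ h : E, h ∈ H ∧ h ≠ 0 ∧ ‖h‖ < 1 / (n + 1) := by
    intro n
    obtain ⟨h, hH, h0, hn⟩ := hnd (1 / (n + 1)) (by positivity)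
    exact ⟨h, hH, h0, hn⟩
  choose h hH h0 hsmall using hex
  set u : ℕ → E := fun n => ‖h n‖⁻¹ • h n with hu
  have hnorm : ∀ n, ‖h n‖ ≠ 0 := fun n => norm_ne_zero_iff.mpr (h0 n)
  have hus : ∀ n, u n ∈ Metric.sphere (0 : E) 1 := by
    intro n
    simp only [u, Metric.mem_sphere, dist_zero_right, norm_smul, norm_inv, norm_norm]
    exact inv_mul_cancel₀ (hnorm n)
  obtain ⟨v, hv, φ, hφ, hlim⟩ := (isCompact_sphere (0 : E) 1).tendsto_subseq hus
  have hv1 : ‖v‖ = 1 := by simpa [dist_zero_right] using hv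
  refine ⟨v, by simp [← norm_ne_zero_iff, hv1], ?_⟩
  intro t
  have hc0 : Filter.Tendsto (fun n => ‖h (φ n)‖) Filter.atTop (nhds 0) := by
    refine squeeze_zero (g := fun n : ℕ => 1 / ((n : ℝ) + 1)) (fun n => norm_nonneg _)
      (fun n => (hsmall (φ n)).le.trans ?_) tendsto_one_div_add_atTop_nhds_zero_nat
    have h4 : (n : ℝ) ≤ (φ n : ℝ) := by exact_mod_cast (hφ.le_apply : n ≤ φ n)
    have h5 : (0:ℝ) < (n:ℝ) + 1 := by positivity
    apply div_le_div_of_nonneg_left one_pos.le h5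
    linarith
  have key : Filter.Tendsto (fun n => (⌊t / ‖h (φ n)‖⌋ : ℝ) * ‖h (φ n)‖)
      Filter.atTop (nhds t) := by
    have hb : ∀ n, |(⌊t / ‖h (φ n)‖⌋ : ℝ) * ‖h (φ n)‖ - t| ≤ ‖h (φ n)‖ := by
      intro n
      have hne := hnorm (φ n)
      have hpos : (0:ℝ) < ‖h (φ n)‖ := lt_of_le_of_ne (norm_nonneg _) (Ne.symm hne)
      set s := t / ‖h (φ n)‖ with hs
      have h1 : (⌊s⌋ : ℝ) * ‖h (φ n)‖ - t = ((⌊s⌋ : ℝ) - s) * ‖h (φ n)‖ := by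
        rw [sub_mul, hs, div_mul_cancel₀ _ hne]
      rw [h1, abs_mul, abs_of_pos hpos]
      have h2 : |(⌊s⌋ : ℝ) - s| ≤ 1 := by
        rw [abs_le]
        constructor
        · linarith [Int.sub_one_lt_floor s]
        · linarith [Int.floor_le s]
      nlinarith
    have h3 : Filter.Tendsto (fun n => (⌊t / ‖h (φ n)‖⌋ : ℝ) * ‖h (φ n)‖ - t)
        Filter.atTop (nhds 0) :=
      squeeze_zero_norm (fun n => by simpa using hb n) hc0
    simpa using h3.add_const t
  have hsm : Filter.Tendsto (fun n => ((⌊t / ‖h (φ n)‖⌋ : ℝ) * ‖h (φ n)‖) • (u ∘ φ) n)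
      Filter.atTop (nhds (t • v)) := key.smul hlim
  have heq : ∀ n, ((⌊t / ‖h (φ n)‖⌋ : ℝ) * ‖h (φ n)‖) • (u ∘ φ) n
      = (⌊t / ‖h (φ n)‖⌋ : ℤ) • h (φ n) := by
    intro n
    simp only [Function.comp_apply, hu, smul_smul, ← Int.cast_smul_eq_zsmul ℝ]
    congr 1
    rw [mul_assoc, mul_inv_cancel₀ (hnorm (φ n)), mul_one]
  refine hc.mem_of_tendsto hsm (Filter.Eventually.of_forall fun n => ?_)
  rw [heq n]
  exact H.zsmul_mem (hH (φ n)) _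

lemma annihilator_of_proper_closed : ∀ (n : ℕ) (E : Type) [NormedAddCommGroup E]
    [NormedSpace ℝ E] [FiniteDimensional ℝ E], Module.finrank ℝ E = n →
    ∀ (H : AddSubgroup E), IsClosed (H : Set E) → H ≠ ⊤ →
    ∃ φ : E →ₗ[ℝ] ℝ, φ ≠ 0 ∧ ∀ h ∈ H, ∃ c : ℤ, φ h = c := by
  intro n
  induction n with
  | zero =>
    intro E _ _ _ hrank H _ hne
    haveI : Subsingleton E := finrank_zero_iff.mp hrank
    exact absurd (Subsingleton.elim H ⊤) hne
  | succ n ih =>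
    intro E _ _ _ hrank H hcl hne
    by_cases hd : ∃ ε > 0, ∀ h ∈ H, ‖h‖ < ε → h = 0
    · -- discrete case
      obtain ⟨ε, hε, hiso⟩ := hd
      set L : Submodule ℤ E := AddSubgroup.toIntSubmodule H with hL
      haveI : DiscreteTopology L := by
        rw [discreteTopology_iff_isOpen_singleton_zero]
        have hset : ({0} : Set L) = Subtype.val ⁻¹' Metric.ball (0 : E) ε := by
          ext ⟨y, hy⟩
          simp only [Set.mem_singleton_iff, Set.mem_preimage, Metric.mem_ball,
            dist_zero_right]
          constructor
          · intro h0
            have hy0 : y = 0 := by simpa [Subtype.ext_iff] using h0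
            simpa [hy0] using hε
          · intro hlt
            have : y = 0 := hiso y hy hlt
            simpa [Subtype.ext_iff] using this
        rw [hset]
        exact Metric.isOpen_ball.preimage continuous_subtype_val
      by_cases hspan : Submodule.span ℝ (L : Set E) = ⊤
      · haveI : IsZLattice ℝ L := ⟨hspan⟩
        set b := Module.Free.chooseBasis ℤ L with hb
        set b' := Basis.ofZLatticeBasis ℝ L b with hb'
        haveI : Nontrivial E := by
          apply Module.nontrivial_of_finrank_pos (R := ℝ) (M := E)
          omega
        haveI : Nonempty (Module.Free.ChooseBasisIndex ℤ ↥L) := b'.index_nonempty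
        set i₀ := Classical.arbitrary (Module.Free.ChooseBasisIndex ℤ ↥L)
        refine ⟨b'.coord i₀, ?_, ?_⟩
        · intro h0
          have : b'.coord i₀ (b' i₀) = 1 := by
            simp [Basis.coord_apply]
          rw [h0] at this
          simpa using this
        · intro h hh
          have hhL : h ∈ L := hh
          refine ⟨b.repr (⟨h, hhL⟩ : L) i₀, ?_⟩
          have h2 := Basis.ofZLatticeBasis_repr_apply ℝ L b (⟨h, hhL⟩ : L) i₀
          rw [Basis.coord_apply]
          exact h2
      · obtain ⟨f, hf0, hf⟩ := Submodule.exists_dual_map_eq_bot_of_lt_top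
          (lt_top_iff_ne_top.mpr hspan) inferInstance
        refine ⟨f, hf0, fun h hh => ⟨0, ?_⟩⟩
        have : f h ∈ Submodule.map f (Submodule.span ℝ (L : Set E)) :=
          Submodule.mem_map_of_mem (Submodule.subset_span hh)
        rw [hf] at this
        simpa using this
    · push_neg at hd
      have hnd : ∀ ε > 0, ∃ h ∈ H, h ≠ 0 ∧ ‖h‖ < ε := by
        intro ε hε
        obtain ⟨h, hh, hlt, h0⟩ := hd ε hε
        exact ⟨h, hh, h0, hlt⟩
      obtain ⟨v, hv0, hline⟩ := line_mem_of_not_discrete H hcl hnd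
      obtain ⟨g, hg1, hgv⟩ := exists_dual_vector ℝ v (norm_ne_zero_iff.mpr hv0)
      set φ₀ : E →ₗ[ℝ] ℝ := ‖v‖⁻¹ • (g.toLinearMap) with hφ₀def
      have hφ₀v : φ₀ v = 1 := by
        simp only [hφ₀def, LinearMap.smul_apply, ContinuousLinearMap.coe_coe, hgv,
          smul_eq_mul]
        exact inv_mul_cancel₀ (norm_ne_zero_iff.mpr hv0)
      set W := LinearMap.ker φ₀ with hW
      have hrW : Module.finrank ℝ W = n := by
        rw [hW]
        have hsurj : Function.Surjective φ₀ := fun r =>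
          ⟨r • v, by rw [map_smul, hφ₀v, smul_eq_mul, mul_one]⟩
        have hre := LinearMap.finrank_range_add_finrank_ker φ₀
        rw [LinearMap.range_eq_top.mpr hsurj, finrank_top, hrank] at hre
        simp only [Module.finrank_self] at hre
        omega
      set H' : AddSubgroup W := H.comap W.subtype.toAddMonoidHom with hH'
      have hmemH' : ∀ w : W, w ∈ H' ↔ (w : E) ∈ H := fun w => Iff.rfl
      have hclosed' : IsClosed (H' : Set W) := by
        have : (H' : Set W) = Subtype.val ⁻¹' (H : Set E) := rfl
        rw [this]
        exact hcl.preimage continuous_subtype_val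
      have hproj : ∀ xx : E, xx - φ₀ xx • v ∈ W := by
        intro xx
        simp [hW, LinearMap.mem_ker, map_smul, hφ₀v, map_sub]
      have hne' : H' ≠ ⊤ := by
        intro htop
        apply hne
        rw [AddSubgroup.eq_top_iff']
        intro xx
        have hw : xx - φ₀ xx • v ∈ H := by
          have : (⟨xx - φ₀ xx • v, hproj xx⟩ : W) ∈ H' := htop ▸ AddSubgroup.mem_top _
          exact (hmemH' _).mp this
        have := H.add_mem hw (hline (φ₀ xx))
        simpa using this
      obtain ⟨ψ, hψ0, hψ⟩ := ih W hrW H' hclosed' hne'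
      set π : E →ₗ[ℝ] W := LinearMap.codRestrict W (LinearMap.id - φ₀.smulRight v)
        (fun xx => by simpa using hproj xx) with hπ
      have hπ_apply : ∀ xx : E, (π xx : E) = xx - φ₀ xx • v := fun xx => rfl
      refine ⟨ψ ∘ₗ π, ?_, ?_⟩
      · obtain ⟨w, hw⟩ := DFunLike.ne_iff.mp hψ0
        apply DFunLike.ne_iff.mpr
        refine ⟨(w : E), ?_⟩
        have hπw : π (w : E) = w := by
          apply Subtype.ext
          rw [hπ_apply]
          have : φ₀ (w : E) = 0 := w.2
          rw [this, zero_smul, sub_zero]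
        simpa [LinearMap.comp_apply, hπw] using hw
      · intro h hh
        have hπh : (π h : E) ∈ H := by
          rw [hπ_apply]
          exact H.sub_mem hh (hline (φ₀ h))
        obtain ⟨c, hc⟩ := hψ (π h) ((hmemH' _).mpr hπh)
        exact ⟨c, by simpa [LinearMap.comp_apply] using hc⟩

/-- Pigeonhole: there are arbitrarily small vectors of the form `p • x + z` with `p` a
positive integer. -/
lemma exists_small_pos_multiple (K : ℕ) (x : Fin K → ℝ) {δ : ℝ} (hδ : 0 < δ) :
    ∃ p : ℕ, 0 < p ∧ ∃ z : Fin K → ℤ, ∀ k, |(p : ℝ) * x k + z k| < δ := by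
  set f : ℕ → (Fin K → ℝ) := fun m k => Int.fract ((m : ℝ) * x k) with hf
  have hmem : ∀ m, f m ∈ Set.Icc (0 : Fin K → ℝ) 1 := by
    intro m
    constructor
    · intro k; exact Int.fract_nonneg _
    · intro k; exact (Int.fract_lt_one _).le
  obtain ⟨ℓ, -, φ, hφ, hlim⟩ := (isCompact_Icc (a := (0 : Fin K → ℝ)) (b := 1)).tendsto_subseq hmem
  rw [Metric.tendsto_atTop] at hlim
  obtain ⟨N, hN⟩ := hlim (δ / 2) (by positivity)
  set m₁ := φ N with hm₁
  set m₂ := φ (N + 1) with hm₂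
  have hlt : m₁ < m₂ := hφ (Nat.lt_succ_self N)
  refine ⟨m₂ - m₁, Nat.sub_pos_of_lt hlt, fun k => ⌊(m₁ : ℝ) * x k⌋ - ⌊(m₂ : ℝ) * x k⌋, ?_⟩
  intro k
  have hdist : dist (f m₂) (f m₁) < δ := by
    calc dist (f m₂) (f m₁) ≤ dist (f m₂) ℓ + dist (f m₁) ℓ := dist_triangle_right _ _ _
    _ < δ / 2 + δ / 2 := add_lt_add (hN (N + 1) (Nat.le_succ N)) (hN N le_rfl)
    _ = δ := by ring
  have hcoord : dist (f m₂ k) (f m₁ k) < δ := lt_of_le_of_lt (dist_le_pi_dist _ _ k) hdist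
  have heq : ((m₂ - m₁ : ℕ) : ℝ) * x k + ((⌊(m₁ : ℝ) * x k⌋ - ⌊(m₂ : ℝ) * x k⌋ : ℤ) : ℝ)
      = f m₂ k - f m₁ k := by
    have hcast : ((m₂ - m₁ : ℕ) : ℝ) = (m₂ : ℝ) - (m₁ : ℝ) := by
      rw [Nat.cast_sub hlt.le]
    rw [hcast, hf]
    simp only [Int.fract]
    push_cast
    ring
  rw [heq]
  rw [Real.dist_eq] at hcoord
  exact hcoord

/-- Density of `ℤ x + ℤ^K` in `ℝ^K` under the independence hypothesis. -/
lemma exists_int_approx (K : ℕ) (x : Fin K → ℝ)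
    (hind : ∀ (q₀ : ℚ) (q : Fin K → ℚ),
      (q₀ : ℝ) + ∑ k, (q k : ℝ) * x k = 0 → q₀ = 0 ∧ ∀ k, q k = 0)
    (y : Fin K → ℝ) {δ : ℝ} (hδ : 0 < δ) :
    ∃ (m : ℤ) (z : Fin K → ℤ), ∀ k, |(m : ℝ) * x k + z k - y k| < δ := by
  classical
  set ρ : ℤ × (Fin K → ℤ) →+ (Fin K → ℝ) :=
    AddMonoidHom.mk' (fun mz => fun k => (mz.1 : ℝ) * x k + (mz.2 k : ℝ))
      (by
        intro p q
        funext k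
        simp only [Prod.fst_add, Prod.snd_add, Pi.add_apply]
        push_cast
        ring) with hρ
  set G := ρ.range with hG
  have hdense : Dense (G : Set (Fin K → ℝ)) := by
    by_contra hnd
    have hne : G.topologicalClosure ≠ ⊤ := by
      intro h
      apply hnd
      have : (G.topologicalClosure : Set (Fin K → ℝ)) = closure (G : Set (Fin K → ℝ)) :=
        AddSubgroup.topologicalClosure_coe
      rw [h] at this
      simp only [AddSubgroup.coe_top] at this
      rw [dense_iff_closure_eq, ← this]
    obtain ⟨φf, hφ0, hφint⟩ := annihilator_of_proper_closed (Module.finrank ℝ (Fin K → ℝ))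
      (Fin K → ℝ) rfl G.topologicalClosure G.isClosed_topologicalClosure hne
    have hGsub : ∀ g ∈ G, g ∈ G.topologicalClosure := fun g hg =>
      G.le_topologicalClosure hg
    -- integer values on the generators
    have hxG : x ∈ G := ⟨(1, 0), by
      funext k
      simp [hρ, AddMonoidHom.mk'_apply]⟩
    obtain ⟨c₀, hc₀⟩ := hφint x (hGsub x hxG)
    have hsingle : ∀ k, Pi.single k (1 : ℝ) ∈ G := by
      intro k
      refine ⟨(0, Pi.single k 1), ?_⟩
      funext j
      simp only [hρ, AddMonoidHom.mk'_apply, Int.cast_zero, zero_mul, zero_add,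
        Pi.single_apply]
      split_ifs <;> simp
    have hck : ∀ k, ∃ c : ℤ, φf (Pi.single k (1 : ℝ)) = c := fun k =>
      hφint _ (hGsub _ (hsingle k))
    choose c hc using hck
    -- expand φf over the standard basis
    have hexpand : ∀ w : Fin K → ℝ, φf w = ∑ k, w k * (c k : ℝ) := by
      intro w
      have hw : w = ∑ k, w k • (Pi.single k 1 : Fin K → ℝ) := by
        funext j
        simp [Pi.single_apply, Finset.sum_apply]
      calc φf w = φf (∑ k, w k • (Pi.single k 1 : Fin K → ℝ)) := by rw [← hw]
      _ = ∑ k, w k • φf (Pi.single k 1 : Fin K → ℝ) := by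
          rw [map_sum]; simp [map_smul]
      _ = ∑ k, w k * (c k : ℝ) := by
          refine Finset.sum_congr rfl fun k _ => ?_
          rw [smul_eq_mul]
          congr 1
          exact hc k
    have hrel : ((-c₀ : ℤ) : ℝ) + ∑ k, ((c k : ℤ) : ℝ) * x k = 0 := by
      have := hexpand x
      rw [hc₀] at this
      push_cast
      rw [show ∑ k, ((c k : ℤ) : ℝ) * x k = ∑ k, x k * ((c k : ℤ) : ℝ) by
        exact Finset.sum_congr rfl fun k _ => mul_comm _ _, ← this]
      ring
    have happ := hind ((-c₀ : ℤ) : ℚ) (fun k => ((c k : ℤ) : ℚ)) (by push_cast; push_cast at hrel; exact hrel)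
    have hc0 : ∀ k, c k = 0 := by
      intro k
      have h5 : ((c k : ℤ) : ℚ) = 0 := happ.2 k
      exact_mod_cast h5
    apply hφ0
    apply LinearMap.ext
    intro w
    rw [hexpand w]
    simp [hc0]
  have hy : y ∈ closure (G : Set (Fin K → ℝ)) := hdense y
  rw [Metric.mem_closure_iff] at hy
  obtain ⟨g, hgG, hdist⟩ := hy δ hδ
  obtain ⟨⟨m, z⟩, rfl⟩ := hgG
  refine ⟨m, z, fun k => ?_⟩
  have := lt_of_le_of_lt (dist_le_pi_dist y (ρ (m, z)) k) hdist
  rw [Real.dist_eq, abs_sub_comm] at this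
  exact this

lemma clamp_abs {a δ : ℝ} (h0 : 0 ≤ a) (h1 : a ≤ 1) (hδ0 : 0 < δ) (hδ : δ ≤ 1/4) :
    |min (max a δ) (1 - δ) - a| ≤ δ := by
  rw [abs_le, min_def, max_def]
  split_ifs <;> constructor <;> linarith

/-- **Density of the Kronecker orbit.** If `1, x₁, …, x_K` are linearly
independent over `ℚ`, then the set of fractional-part vectors
`(fract(m·x₁), …, fract(m·x_K))`, over positive integers `m`, is dense in the
cube `[0,1]^K`. -/
theorem fract_orbit_dense (K : ℕ) (x : Fin K → ℝ)
    (hind : ∀ (q₀ : ℚ) (q : Fin K → ℚ),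
      (q₀ : ℝ) + ∑ k, (q k : ℝ) * x k = 0 → q₀ = 0 ∧ ∀ k, q k = 0) :
    Set.Icc (0 : Fin K → ℝ) 1 ⊆
      closure {p : Fin K → ℝ |
        ∃ m : ℕ, 0 < m ∧ p = fun k => Int.fract ((m : ℝ) * x k)} := by
  intro y hy
  obtain ⟨hy0, hy1⟩ := hy
  rw [Metric.mem_closure_iff]
  intro ε hε
  set δ := min (ε / 2) (1 / 4) with hδdef
  have hδ0 : 0 < δ := lt_min (by positivity) (by norm_num)
  have hδ4 : δ ≤ 1 / 4 := min_le_right _ _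
  have hδε : δ ≤ ε / 2 := min_le_left _ _
  set y' : Fin K → ℝ := fun k => min (max (y k) δ) (1 - δ) with hy'
  have hy'lo : ∀ k, δ ≤ y' k := fun k => le_min (le_max_right _ _) (by linarith)
  have hy'hi : ∀ k, y' k ≤ 1 - δ := fun k => min_le_right _ _
  have hy'near : ∀ k, |y' k - y k| ≤ δ := fun k => clamp_abs (hy0 k) (hy1 k) hδ0 hδ4
  obtain ⟨m, z, hmz⟩ := exists_int_approx K x hind y' (δ := δ / 2) (by positivity)
  set k₀ : ℕ := m.natAbs + 1 with hk₀
  have hk₀pos : (0 : ℝ) < (k₀ : ℝ) := by positivity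
  obtain ⟨p, hp, z', hz'⟩ := exists_small_pos_multiple K x
    (δ := δ / (2 * k₀)) (by positivity)
  set M : ℤ := m + (k₀ : ℤ) * p with hM
  have hMpos : 0 < M := by
    have hp' : (1 : ℤ) ≤ p := by exact_mod_cast hp
    have h1 : (k₀ : ℤ) * 1 ≤ (k₀ : ℤ) * p := by
      apply mul_le_mul_of_nonneg_left hp' (by positivity)
    have h2 : (m.natAbs : ℤ) ≥ -m := by omega
    rw [hM]
    have : (k₀ : ℤ) = (m.natAbs : ℤ) + 1 := by simp [hk₀]
    omega
  clear_value k₀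
  set z'' : Fin K → ℤ := fun k => z k + (k₀ : ℤ) * z' k with hz''
  have hsk : ∀ k, |(M : ℝ) * x k + (z'' k : ℝ) - y' k| < δ := by
    intro k
    have h1 := hmz k
    have h2 := hz' k
    have hexp : (M : ℝ) * x k + (z'' k : ℝ) - y' k
        = ((m : ℝ) * x k + (z k : ℝ) - y' k)
          + (k₀ : ℝ) * ((p : ℝ) * x k + (z' k : ℝ)) := by
      rw [hM, hz'']
      push_cast
      ring
    rw [hexp]
    have h3 : |((m : ℝ) * x k + (z k : ℝ) - y' k)
        + (k₀ : ℝ) * ((p : ℝ) * x k + (z' k : ℝ))|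
        ≤ |(m : ℝ) * x k + (z k : ℝ) - y' k|
          + (k₀ : ℝ) * |(p : ℝ) * x k + (z' k : ℝ)| := by
      calc _ ≤ |(m : ℝ) * x k + (z k : ℝ) - y' k|
          + |(k₀ : ℝ) * ((p : ℝ) * x k + (z' k : ℝ))| := abs_add_le _ _
      _ = _ := by rw [abs_mul, abs_of_pos hk₀pos]
    have h4 : (k₀ : ℝ) * |(p : ℝ) * x k + (z' k : ℝ)| < (k₀ : ℝ) * (δ / (2 * k₀)) :=
      mul_lt_mul_of_pos_left h2 hk₀pos
    have h5 : (k₀ : ℝ) * (δ / (2 * k₀)) = δ / 2 := by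
      field_simp
    linarith
  have hs0 : ∀ k, 0 < (M : ℝ) * x k + (z'' k : ℝ) := by
    intro k
    have := hsk k
    rw [abs_lt] at this
    have := hy'lo k
    linarith [this]
  have hs1 : ∀ k, (M : ℝ) * x k + (z'' k : ℝ) < 1 := by
    intro k
    have h6 := hsk k
    rw [abs_lt] at h6
    have := hy'hi k
    linarith [h6.2]
  set Mn : ℕ := M.toNat with hMn
  have hMnpos : 0 < Mn := by omega
  have hMncast : ((Mn : ℕ) : ℝ) = (M : ℝ) := by
    rw [hMn]
    exact_mod_cast congrArg (Int.cast : ℤ → ℝ) (Int.toNat_of_nonneg hMpos.le)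
  refine ⟨fun k => Int.fract ((Mn : ℝ) * x k), ⟨Mn, hMnpos, rfl⟩, ?_⟩
  have hbk : ∀ k, Int.fract ((Mn : ℝ) * x k) = (M : ℝ) * x k + (z'' k : ℝ) := by
    intro k
    rw [hMncast]
    have h7 : Int.fract ((M : ℝ) * x k + (z'' k : ℝ)) = Int.fract ((M : ℝ) * x k) :=
      Int.fract_add_intCast _ _
    have h8 : Int.fract ((M : ℝ) * x k + (z'' k : ℝ)) = (M : ℝ) * x k + (z'' k : ℝ) :=
      Int.fract_eq_self.mpr ⟨(hs0 k).le, hs1 k⟩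
    rw [← h8, h7]
  have hd1 : dist y y' ≤ δ := by
    rw [dist_pi_le_iff hδ0.le]
    intro k
    rw [Real.dist_eq, abs_sub_comm]
    exact hy'near k
  have hd2 : dist y' (fun k => Int.fract ((Mn : ℝ) * x k)) < δ := by
    rw [dist_pi_lt_iff hδ0]
    intro k
    rw [Real.dist_eq, abs_sub_comm, hbk k]
    exact hsk k
  calc dist y (fun k => Int.fract ((Mn : ℝ) * x k))
      ≤ dist y y' + dist y' (fun k => Int.fract ((Mn : ℝ) * x k)) := dist_triangle _ _ _
  _ < δ + δ := add_lt_add_of_le_of_lt hd1 hd2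
  _ ≤ ε := by linarith
end

section
/- Let K ≥ 1 and let θ_1, ..., θ_K be real numbers such that 1, cos(θ_1), ..., cos(θ_K) are linearly independent over ℚ; fix i ∈ {1, ..., K}, let P_1, ..., P_K > 0 be transmit powers and σ > 0 a noise level. Then for every δ > 0 there exists a positive integer d such that the signal-to-interference-plus-noise ratio satisfies P_i·g(θ_i; d) / (∑_{k ≠ i} P_k·g(θ_k; d) + σ²) > P_i/σ² − δ, where g(θ; d) := (1 + cos(2π·d·cos θ))/2. -/
open Complex Finset Filter

noncomputable def eC (x : ℝ) : ℂ := Complex.exp (2 * Real.pi * Complex.I * x)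

lemma eC_add (x y : ℝ) : eC (x + y) = eC x * eC y := by
  rw [eC, eC, eC, ← Complex.exp_add]; push_cast; ring_nf

lemma eC_zero : eC 0 = 1 := by simp [eC]

lemma eC_nat_mul (d : ℕ) (x : ℝ) : eC (d * x) = eC x ^ d := by
  induction d with
  | zero => simp [eC_zero]
  | succ n ih => push_cast; rw [add_mul, one_mul, eC_add, ih, pow_succ]

lemma norm_eC (x : ℝ) : ‖eC x‖ = 1 := by
  rw [eC]
  have : (2 * Real.pi * Complex.I * x) = ((2 * Real.pi * x : ℝ) : ℂ) * Complex.I := by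
    push_cast; ring
  rw [this, Complex.norm_exp_ofReal_mul_I]

lemma eC_ne_one {x : ℝ} (h : ∀ z : ℤ, x ≠ z) : eC x ≠ 1 := by
  intro hx
  rw [eC, Complex.exp_eq_one_iff] at hx
  obtain ⟨n, hn⟩ := hx
  have h2 : (2 * Real.pi * Complex.I) ≠ 0 := by
    simp [Real.pi_ne_zero, Complex.I_ne_zero, Complex.ofReal_ne_zero]
  rw [mul_comm (n : ℂ)] at hn
  have : (x : ℂ) = (n : ℂ) := mul_left_cancel₀ h2 hn
  exact h n (by exact_mod_cast this)

lemma eC_int (n : ℤ) : eC n = 1 := by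
  rw [eC, Complex.exp_eq_one_iff]
  exact ⟨n, by push_cast; ring⟩

/-- Cesàro average of a geometric sequence with ratio `z ≠ 1`, `‖z‖ = 1`, tends to 0. -/
lemma tendsto_avg_geom {z : ℂ} (hz : z ≠ 1) (hn : ‖z‖ = 1) :
    Tendsto (fun N : ℕ => (∑ d ∈ Finset.Icc 1 N, z ^ d) / N) atTop (nhds 0) := by
  have hz1 : ‖z - 1‖ ≠ 0 := by simpa [sub_eq_zero] using hz
  have hz1' : 0 < ‖z - 1‖ := lt_of_le_of_ne (norm_nonneg _) (Ne.symm hz1)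
  have hb : ∀ N : ℕ, ‖∑ d ∈ Finset.Icc 1 N, z ^ d‖ ≤ 2 / ‖z - 1‖ := by
    intro N
    have h1 : ∑ d ∈ Finset.Icc 1 N, z ^ d = z * ∑ d ∈ Finset.range N, z ^ d := by
      induction N with
      | zero => simp
      | succ n ih =>
        rw [Finset.sum_Icc_succ_top (by omega), ih, Finset.sum_range_succ]
        ring
    rw [h1, geom_sum_eq hz]
    rw [norm_mul, hn, one_mul, norm_div]
    gcongr
    calc ‖z ^ N - 1‖ ≤ ‖z ^ N‖ + ‖(1 : ℂ)‖ := norm_sub_le _ _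
      _ = 2 := by rw [norm_pow, hn]; norm_num
  have hto : Tendsto (fun N : ℕ => (2 / ‖z - 1‖) / N) atTop (nhds 0) :=
    tendsto_const_div_atTop_nhds_zero_nat _
  apply squeeze_zero_norm _ hto
  intro N
  rw [norm_div]
  have : ‖(N : ℂ)‖ = (N : ℝ) := by simp
  rw [this]
  gcongr
  exact hb N

/-- A (single-variable) trigonometric polynomial. -/
def TP1 (H : ℝ → ℂ) : Prop :=
  ∃ (ι : Type) (_ : Fintype ι) (n : ι → ℤ) (c : ι → ℂ),
    ∀ x, H x = ∑ j, c j * eC (n j * x)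

lemma TP1.const (μ : ℂ) : TP1 (fun _ => μ) := by
  refine ⟨PUnit, inferInstance, fun _ => 0, fun _ => μ, fun x => ?_⟩
  simp [eC_zero]

lemma TP1.mul {H₁ H₂ : ℝ → ℂ} (h₁ : TP1 H₁) (h₂ : TP1 H₂) :
    TP1 (fun x => H₁ x * H₂ x) := by
  obtain ⟨ι₁, f₁, n₁, c₁, e₁⟩ := h₁
  obtain ⟨ι₂, f₂, n₂, c₂, e₂⟩ := h₂
  refine ⟨ι₁ × ι₂, @instFintypeProd _ _ f₁ f₂,
    fun p => n₁ p.1 + n₂ p.2, fun p => c₁ p.1 * c₂ p.2, fun x => ?_⟩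
  beta_reduce
  rw [e₁, e₂, Finset.sum_mul_sum]
  rw [← Finset.sum_product']
  apply Finset.sum_congr rfl
  intro p _
  have : ((n₁ p.1 + n₂ p.2 : ℤ) : ℝ) * x = (n₁ p.1 : ℝ) * x + (n₂ p.2 : ℝ) * x := by
    push_cast; ring
  rw [this, eC_add]; ring

lemma TP1.pow {H : ℝ → ℂ} (h : TP1 H) (m : ℕ) : TP1 (fun x => H x ^ m) := by
  induction m with
  | zero => simpa using TP1.const 1
  | succ n ih => simpa [pow_succ] using ih.mul h

lemma TP1.cos2pi : TP1 (fun x => ((Real.cos (2 * Real.pi * x) : ℝ) : ℂ)) := by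
  refine ⟨Bool, inferInstance, fun b => if b then 1 else -1,
    fun _ => 1/2, fun x => ?_⟩
  beta_reduce
  rw [Fintype.sum_bool]
  simp only [if_true, if_false]
  push_cast
  rw [eC, eC, Complex.cos]
  push_cast
  ring_nf

section Rep

variable {K : ℕ} (cc : Fin K → ℝ)

/-- `f : ℕ → ℂ` is a sum of nonconstant characters `d ↦ e(d⟨n,cc⟩)` with
frequency vectors supported in `S`. -/
def RepC0 (S : Finset (Fin K)) (f : ℕ → ℂ) : Prop :=
  ∃ (ι : Type) (_ : Fintype ι) (n : ι → Fin K → ℤ) (c : ι → ℂ),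
    (∀ j, n j ≠ 0) ∧ (∀ j, ∀ l ∉ S, n j l = 0) ∧
    ∀ d : ℕ, f d = ∑ j, c j * eC (d * ∑ k, (n j k : ℝ) * cc k)

/-- `f` is a trig poly in `d` with variables in `S` and constant coefficient `μ`. -/
def RepC (S : Finset (Fin K)) (f : ℕ → ℂ) (μ : ℂ) : Prop :=
  RepC0 cc S (fun d => f d - μ)

namespace RepC

variable {cc}

lemma zero0 (S : Finset (Fin K)) : RepC0 cc S (fun _ => 0) :=
  ⟨Empty, inferInstance, fun j => j.elim, fun j => j.elim, fun j => j.elim, fun j => j.elim,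
    fun d => by simp⟩

lemma const (S : Finset (Fin K)) (μ : ℂ) : RepC cc S (fun _ => μ) μ := by
  simpa [RepC, sub_self] using zero0 (cc := cc) S

lemma add0 {S f g} (hf : RepC0 cc S f) (hg : RepC0 cc S g) :
    RepC0 cc S (fun d => f d + g d) := by
  obtain ⟨ι₁, i₁, n₁, c₁, hn₁, hs₁, e₁⟩ := hf
  obtain ⟨ι₂, i₂, n₂, c₂, hn₂, hs₂, e₂⟩ := hg
  letI := i₁; letI := i₂
  refine ⟨ι₁ ⊕ ι₂, inferInstance, Sum.elim n₁ n₂, Sum.elim c₁ c₂,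
    fun j => by cases j <;> simp [hn₁, hn₂],
    fun j l hl => by cases j <;> simp [hs₁ _ _ hl, hs₂ _ _ hl], fun d => ?_⟩
  beta_reduce
  rw [e₁, e₂, Fintype.sum_sum_type]
  simp

lemma smul0 {S f} (a : ℂ) (hf : RepC0 cc S f) : RepC0 cc S (fun d => a * f d) := by
  obtain ⟨ι, inst, n, c, hn, hs, e⟩ := hf
  exact ⟨ι, inst, n, fun j => a * c j, hn, hs, fun d =>
    by beta_reduce; rw [e, Finset.mul_sum]; simp [mul_assoc]⟩

lemma mono0 {S S' f} (hss : S ⊆ S') (hf : RepC0 cc S f) : RepC0 cc S' f := by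
  obtain ⟨ι, inst, n, c, hn, hs, e⟩ := hf
  exact ⟨ι, inst, n, c, hn, fun j l hl => hs j l (fun h => hl (hss h)), e⟩

lemma mul0 {S S' f g} (hd : Disjoint S S') (hf : RepC0 cc S f) (hg : RepC0 cc S' g) :
    RepC0 cc (S ∪ S') (fun d => f d * g d) := by
  obtain ⟨ι₁, i₁, n₁, c₁, hn₁, hs₁, e₁⟩ := hf
  obtain ⟨ι₂, i₂, n₂, c₂, hn₂, hs₂, e₂⟩ := hg
  letI := i₁; letI := i₂
  refine ⟨ι₁ × ι₂, inferInstance,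
    fun p => n₁ p.1 + n₂ p.2, fun p => c₁ p.1 * c₂ p.2, fun p => ?_, fun p l hl => ?_, fun d => ?_⟩
  · -- nonzero
    intro h0
    obtain ⟨l, hl⟩ : ∃ l, n₁ p.1 l ≠ 0 := by
      by_contra hc; push_neg at hc; exact hn₁ p.1 (funext hc)
    have hlS : l ∈ S := by by_contra hc; exact hl (hs₁ _ _ hc)
    have hlS' : l ∉ S' := Finset.disjoint_left.mp hd hlS
    have : n₁ p.1 l + n₂ p.2 l = 0 := by
      have := congrFun h0 l; simpa using this
    rw [hs₂ _ _ hlS', add_zero] at this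
    exact hl this
  · simp [hs₁ _ _ (fun h => hl (Finset.mem_union_left _ h)),
      hs₂ _ _ (fun h => hl (Finset.mem_union_right _ h))]
  · beta_reduce
    rw [e₁, e₂, Finset.sum_mul_sum, ← Finset.sum_product']
    apply Finset.sum_congr rfl
    intro p _
    have : (d : ℝ) * ∑ k, (((n₁ p.1 + n₂ p.2) k : ℤ) : ℝ) * cc k
        = (d : ℝ) * ∑ k, (n₁ p.1 k : ℝ) * cc k + (d : ℝ) * ∑ k, (n₂ p.2 k : ℝ) * cc k := by
      push_cast [Pi.add_apply]
      rw [← mul_add, ← Finset.sum_add_distrib]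
      congr 1; apply Finset.sum_congr rfl; intro k _; ring
    rw [this, eC_add]; ring

lemma add {S f g μ ν} (hf : RepC cc S f μ) (hg : RepC cc S g ν) :
    RepC cc S (fun d => f d + g d) (μ + ν) := by
  have := add0 hf hg
  simpa [RepC, add_sub_add_comm] using this

lemma smul {S f μ} (a : ℂ) (hf : RepC cc S f μ) : RepC cc S (fun d => a * f d) (a * μ) := by
  have := smul0 a hf
  simpa [RepC, mul_sub] using this

lemma mono {S S' f μ} (hss : S ⊆ S') (hf : RepC cc S f μ) : RepC cc S' f μ :=
  mono0 hss hf

lemma mul {S S' f g μ ν} (hd : Disjoint S S') (hf : RepC cc S f μ) (hg : RepC cc S' g ν) :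
    RepC cc (S ∪ S') (fun d => f d * g d) (μ * ν) := by
  have key : ∀ d : ℕ, f d * g d - μ * ν
      = (f d - μ) * (g d - ν) + (μ * (g d - ν) + ν * (f d - μ)) := by intro d; ring
  unfold RepC
  have h1 : RepC0 cc (S ∪ S') (fun d => (f d - μ) * (g d - ν)) := mul0 hd hf hg
  have h2 : RepC0 cc (S ∪ S') (fun d => μ * (g d - ν) + ν * (f d - μ)) :=
    add0 (smul0 μ (mono0 Finset.subset_union_right hg))
      (smul0 ν (mono0 Finset.subset_union_left hf))
  have := add0 h1 h2
  convert this using 2 with d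
  exact key d

end RepC

lemma integral_eC_int (n : ℤ) :
    (∫ x in (0:ℝ)..1, eC (n * x)) = if n = 0 then 1 else 0 := by
  by_cases hn : n = 0
  · simp [hn, eC_zero]
  · rw [if_neg hn]
    have hc : (2 * Real.pi * Complex.I * n) ≠ 0 := by
      simp [Real.pi_ne_zero, Complex.I_ne_zero, hn]
    have key : ∀ x : ℝ, eC (n * x) = Complex.exp ((2 * Real.pi * Complex.I * n) * x) := by
      intro x; rw [eC]; push_cast; ring_nf
    simp_rw [key]
    rw [integral_exp_mul_complex hc]
    have h1 : (2 * Real.pi * Complex.I * n) * ((1:ℝ):ℂ) = 2 * Real.pi * Complex.I * ((n:ℝ):ℂ) := by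
      push_cast; ring
    have h0 : (2 * Real.pi * Complex.I * n) * ((0:ℝ):ℂ) = 0 := by push_cast; ring
    rw [h1, h0, Complex.exp_zero]
    have h2 : Complex.exp (2 * Real.pi * Complex.I * ((n:ℝ):ℂ)) = eC ((n:ℤ):ℝ) := rfl
    rw [h2, eC_int n, sub_self, zero_div]

lemma eC_cont (n : ℤ) : Continuous (fun x : ℝ => eC (n * x)) := by
  apply Complex.continuous_exp.comp
  continuity

namespace RepC

variable {K : ℕ} {cc : Fin K → ℝ}

lemma single {H : ℝ → ℂ} (hH : TP1 H) (k : Fin K) :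
    RepC cc {k} (fun d : ℕ => H (d * cc k)) (∫ x in (0:ℝ)..1, H x) := by
  obtain ⟨ι, inst, n, c, e⟩ := hH
  letI := inst
  have hμ : (∫ x in (0:ℝ)..1, H x) = ∑ j, c j * (if n j = 0 then 1 else 0) := by
    simp_rw [e]
    rw [intervalIntegral.integral_finset_sum]
    · apply Finset.sum_congr rfl
      intro j _
      rw [intervalIntegral.integral_const_mul, integral_eC_int]
    · intro j _
      apply Continuous.intervalIntegrable
      exact continuous_const.mul (eC_cont (n j))
  refine ⟨{x // x ∈ Finset.univ.filter (fun j => n j ≠ 0)},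
    FinsetCoe.fintype _, fun j => Pi.single k (n j.1),
    fun j => c j.1, fun j => ?_, fun j l hl => ?_, fun d => ?_⟩
  · intro h0
    have h1 : (Pi.single k (n j.1) : Fin K → ℤ) k = 0 := by
      have := congrFun h0 k; simpa using this
    rw [Pi.single_eq_same] at h1
    exact (Finset.mem_filter.mp j.2).2 h1
  · have : l ≠ k := by simpa using hl
    exact Pi.single_eq_of_ne this _
  · beta_reduce
    rw [e, hμ, ← Finset.sum_sub_distrib]
    have step1 : ∑ j, (c j * eC ((n j : ℝ) * ((d:ℝ) * cc k)) - c j * (if n j = 0 then 1 else 0))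
        = ∑ j ∈ Finset.univ.filter (fun j => n j ≠ 0),
            (c j * eC ((n j : ℝ) * ((d:ℝ) * cc k)) - c j * (if n j = 0 then 1 else 0)) := by
      symm
      apply Finset.sum_filter_of_ne
      intro j _ hne h0
      apply hne
      rw [h0]
      simp [eC_zero]
    rw [step1, ← Finset.sum_coe_sort]
    apply Finset.sum_congr rfl
    intro j _
    rw [if_neg (Finset.mem_filter.mp j.2).2, mul_zero, sub_zero]
    have hsum : ∑ l, ((Pi.single k (n j.1) : Fin K → ℤ) l : ℝ) * cc l = (n j.1 : ℝ) * cc k := by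
      rw [Finset.sum_eq_single k]
      · rw [Pi.single_eq_same]
      · intro l _ hlk
        rw [Pi.single_eq_of_ne hlk]; simp
      · simp
    rw [hsum]
    congr 2
    ring

lemma tendsto {f : ℕ → ℂ} {μ : ℂ}
    (hirr : ∀ n : Fin K → ℤ, n ≠ 0 → ∀ z : ℤ, (∑ k, (n k : ℝ) * cc k) ≠ (z : ℝ))
    (h : RepC cc Finset.univ f μ) :
    Filter.Tendsto (fun N : ℕ => (∑ d ∈ Finset.Icc 1 N, f d) / N) Filter.atTop (nhds μ) := by
  obtain ⟨ι, inst, n, c, hn, _, e⟩ := h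
  letI := inst
  have hfd : ∀ d : ℕ, f d = μ + ∑ j, c j * (eC (∑ k, (n j k : ℝ) * cc k)) ^ d := by
    intro d
    have h1 := e d
    simp only at h1
    have h2 : f d - μ = ∑ j, c j * (eC (∑ k, (n j k : ℝ) * cc k)) ^ d := by
      rw [h1]
      apply Finset.sum_congr rfl
      intro j _
      rw [eC_nat_mul]
    exact (eq_add_of_sub_eq h2).trans (add_comm _ _)
  have hα1 : ∀ j, eC (∑ k, (n j k : ℝ) * cc k) ≠ 1 :=
    fun j => eC_ne_one (hirr (n j) (hn j))
  have main : Filter.Tendsto (fun N : ℕ => μ + ∑ j, c j *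
      ((∑ d ∈ Finset.Icc 1 N, eC (∑ k, (n j k : ℝ) * cc k) ^ d) / N))
      Filter.atTop (nhds (μ + ∑ j : ι, c j * 0)) := by
    apply Filter.Tendsto.add tendsto_const_nhds
    apply tendsto_finset_sum
    intro j _
    exact (tendsto_avg_geom (hα1 j) (norm_eC _)).const_mul (c j)
  simp only [mul_zero, Finset.sum_const_zero, add_zero] at main
  refine Filter.Tendsto.congr' ?_ main
  filter_upwards [Filter.eventually_ge_atTop 1] with N hN
  have hNne : (N : ℂ) ≠ 0 := by
    exact_mod_cast Nat.cast_ne_zero.mpr (by omega)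
  have hsum : (∑ d ∈ Finset.Icc 1 N, f d)
      = N * μ + ∑ j, c j * (∑ d ∈ Finset.Icc 1 N, eC (∑ k, (n j k : ℝ) * cc k) ^ d) := by
    simp_rw [hfd]
    rw [Finset.sum_add_distrib, Finset.sum_const, Nat.card_Icc, Nat.add_sub_cancel,
      nsmul_eq_mul, Finset.sum_comm]
    congr 1
    apply Finset.sum_congr rfl
    intro j _
    rw [Finset.mul_sum]
  rw [hsum, add_div, mul_div_cancel_left₀ _ hNne, Finset.sum_div]
  congr 1
  apply Finset.sum_congr rfl
  intro j _
  rw [mul_div_assoc]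

end RepC

lemma TP1.add {H₁ H₂ : ℝ → ℂ} (h₁ : TP1 H₁) (h₂ : TP1 H₂) :
    TP1 (fun x => H₁ x + H₂ x) := by
  obtain ⟨ι₁, i₁, n₁, c₁, e₁⟩ := h₁
  obtain ⟨ι₂, i₂, n₂, c₂, e₂⟩ := h₂
  letI := i₁; letI := i₂
  refine ⟨ι₁ ⊕ ι₂, inferInstance, Sum.elim n₁ n₂, Sum.elim c₁ c₂, fun x => ?_⟩
  beta_reduce
  rw [e₁, e₂, Fintype.sum_sum_type]
  simp

lemma TP1.congr {H₁ H₂ : ℝ → ℂ} (h : ∀ x, H₁ x = H₂ x) (h₁ : TP1 H₁) : TP1 H₂ := by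
  obtain ⟨ι, i, n, c, e⟩ := h₁
  exact ⟨ι, i, n, c, fun x => (h x).symm.trans (e x)⟩

/-- Real trig polynomial (complexification is a `TP1`). -/
def TPR (h : ℝ → ℝ) : Prop := TP1 (fun x => ((h x : ℝ) : ℂ))

lemma TPR.mul {h₁ h₂ : ℝ → ℝ} (a : TPR h₁) (b : TPR h₂) : TPR (fun x => h₁ x * h₂ x) :=
  TP1.congr (fun x => by push_cast; ring) (TP1.mul a b)

lemma TPR.pow {h : ℝ → ℝ} (a : TPR h) (m : ℕ) : TPR (fun x => h x ^ m) :=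
  TP1.congr (fun x => by push_cast; ring) (TP1.pow a m)

/-- The basic gain profile `G x = (1 + cos 2πx)/2` and its complement. -/
noncomputable def Gf : ℝ → ℝ := fun x => (1 + Real.cos (2 * Real.pi * x)) / 2
noncomputable def Gf' : ℝ → ℝ := fun x => (1 - Real.cos (2 * Real.pi * x)) / 2

lemma TPR.G : TPR Gf := by
  unfold TPR Gf
  apply TP1.congr (H₁ := fun x => (1/2 : ℂ) + (1/2 : ℂ) * ((Real.cos (2*Real.pi*x) : ℝ) : ℂ))
  · intro x; push_cast; ring
  · exact TP1.add (TP1.const _) (TP1.mul (TP1.const _) TP1.cos2pi)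

lemma TPR.G' : TPR Gf' := by
  unfold TPR Gf'
  apply TP1.congr (H₁ := fun x => (1/2 : ℂ) + (-1/2 : ℂ) * ((Real.cos (2*Real.pi*x) : ℝ) : ℂ))
  · intro x; push_cast; ring
  · exact TP1.add (TP1.const _) (TP1.mul (TP1.const _) TP1.cos2pi)

lemma Gf_eq_cos_sq (x : ℝ) : Gf x = Real.cos (Real.pi * x) ^ 2 := by
  rw [Real.cos_sq]
  unfold Gf
  rw [show 2 * (Real.pi * x) = 2 * Real.pi * x by ring]
  ring

lemma Gf'_eq_sin_sq (x : ℝ) : Gf' x = Real.sin (Real.pi * x) ^ 2 := by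
  have := Real.sin_sq_eq_half_sub (Real.pi * x)
  rw [this]
  unfold Gf'
  rw [show 2 * (Real.pi * x) = 2 * Real.pi * x by ring]
  ring

noncomputable def aW (m : ℕ) : ℝ := ∫ x in (0:ℝ)..1, Gf x ^ m
noncomputable def bW (m : ℕ) : ℝ := ∫ x in (0:ℝ)..1, Gf' x ^ m

lemma aW_eq (m : ℕ) : aW m = Real.pi⁻¹ * ∫ u in (0:ℝ)..Real.pi, Real.cos u ^ (2*m) := by
  unfold aW
  have h2 := intervalIntegral.integral_comp_mul_left (a := (0:ℝ)) (b := 1)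
    (fun u => Real.cos u ^ (2*m)) Real.pi_ne_zero
  simp only [mul_zero, mul_one, smul_eq_mul] at h2
  simp_rw [Gf_eq_cos_sq, ← pow_mul]
  rw [h2]

lemma bW_eq (m : ℕ) : bW m = Real.pi⁻¹ * ∫ u in (0:ℝ)..Real.pi, Real.sin u ^ (2*m) := by
  unfold bW
  have h2 := intervalIntegral.integral_comp_mul_left (a := (0:ℝ)) (b := 1)
    (fun u => Real.sin u ^ (2*m)) Real.pi_ne_zero
  simp only [mul_zero, mul_one, smul_eq_mul] at h2
  simp_rw [Gf'_eq_sin_sq, ← pow_mul]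
  rw [h2]

lemma cos_pow_rec (n : ℕ) : (∫ u in (0:ℝ)..Real.pi, Real.cos u ^ (n+2))
    = (n+1)/(n+2) * ∫ u in (0:ℝ)..Real.pi, Real.cos u ^ n := by
  rw [integral_cos_pow]
  simp [Real.sin_pi]

lemma sin_pow_rec (n : ℕ) : (∫ u in (0:ℝ)..Real.pi, Real.sin u ^ (n+2))
    = (n+1)/(n+2) * ∫ u in (0:ℝ)..Real.pi, Real.sin u ^ n := by
  rw [integral_sin_pow]
  simp [Real.sin_pi]

lemma cos_pow_eq_sin_pow (m : ℕ) : (∫ u in (0:ℝ)..Real.pi, Real.cos u ^ (2*m))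
    = ∫ u in (0:ℝ)..Real.pi, Real.sin u ^ (2*m) := by
  induction m with
  | zero => simp
  | succ k ih =>
    have h1 : 2 * (k+1) = 2*k + 2 := by ring
    rw [h1, cos_pow_rec, sin_pow_rec, ih]

lemma bW_eq_aW (m : ℕ) : bW m = aW m := by
  rw [aW_eq, bW_eq, cos_pow_eq_sin_pow]

lemma aW_zero : aW 0 = 1 := by unfold aW; simp

lemma aW_succ (m : ℕ) : aW (m+1) = (2*m+1)/(2*m+2) * aW m := by
  rw [aW_eq, aW_eq]
  have h1 : 2 * (m+1) = 2*m + 2 := by ring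
  rw [h1, cos_pow_rec]
  push_cast
  ring

lemma aW_pos (m : ℕ) : 0 < aW m := by
  induction m with
  | zero => rw [aW_zero]; norm_num
  | succ k ih =>
    rw [aW_succ]
    apply mul_pos _ ih
    positivity

lemma Gf_cont : Continuous Gf := by unfold Gf; continuity
lemma Gf'_cont : Continuous Gf' := by unfold Gf'; continuity

/-- `∫ G·G'^m = aW m − aW (m+1)`. -/
lemma int_G_G'_pow (m : ℕ) : (∫ x in (0:ℝ)..1, Gf x * Gf' x ^ m) = aW m - aW (m+1) := by
  have key : ∀ x : ℝ, Gf x * Gf' x ^ m = Gf' x ^ m - Gf' x ^ (m+1) := by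
    intro x
    have : Gf x = 1 - Gf' x := by unfold Gf Gf'; ring
    rw [this]; ring
  simp_rw [key]
  rw [intervalIntegral.integral_sub]
  · rw [← bW_eq_aW, ← bW_eq_aW]
    unfold bW
    rfl
  · exact ((Gf'_cont.pow m).intervalIntegrable 0 1)
  · exact ((Gf'_cont.pow (m+1)).intervalIntegrable 0 1)

namespace RepC

variable {K : ℕ} {cc : Fin K → ℝ}

lemma singleR {h : ℝ → ℝ} (hh : TPR h) (k : Fin K) :
    RepC cc {k} (fun d : ℕ => ((h ((d:ℝ) * cc k) : ℝ) : ℂ))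
      (((∫ x in (0:ℝ)..1, h x : ℝ) : ℂ)) := by
  have h1 := RepC.single (cc := cc) hh k
  rwa [show (∫ x in (0:ℝ)..1, ((h x : ℝ):ℂ)) = ((∫ x in (0:ℝ)..1, h x : ℝ) : ℂ) from
    intervalIntegral.integral_ofReal] at h1

lemma prodR {h : Fin K → ℝ → ℝ} (hh : ∀ k, TPR (h k)) (s : Finset (Fin K)) :
    RepC cc s (fun d : ℕ => ∏ k ∈ s, ((h k ((d:ℝ) * cc k) : ℝ) : ℂ))
      (∏ k ∈ s, ((∫ x in (0:ℝ)..1, h k x : ℝ) : ℂ)) := by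
  induction s using Finset.induction with
  | empty => simpa using RepC.const (cc := cc) ∅ 1
  | insert _ _ hk =>
    rename_i k s ih
    have hd : Disjoint ({k} : Finset (Fin K)) s := Finset.disjoint_singleton_left.mpr hk
    have hm := RepC.mul hd (RepC.singleR (hh k) k) ih
    rw [← Finset.insert_eq] at hm
    rw [Finset.prod_insert hk]
    convert hm using 1
    funext d
    rw [Finset.prod_insert hk]

lemma sub {S f g μ ν} (hf : RepC cc S f μ) (hg : RepC cc S g ν) :
    RepC cc S (fun d => f d - g d) (μ - ν) := by
  have := RepC.add hf (RepC.smul (-1) hg)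
  simpa [sub_eq_add_neg, neg_mul] using this

lemma finsum {ι : Type*} (s : Finset ι) (f : ι → ℕ → ℂ) (μ : ι → ℂ) (S : Finset (Fin K))
    (h : ∀ j ∈ s, RepC cc S (f j) (μ j)) :
    RepC cc S (fun d => ∑ j ∈ s, f j d) (∑ j ∈ s, μ j) := by
  induction s using Finset.cons_induction with
  | empty => simpa using RepC.const (cc := cc) S 0
  | cons j s hj ih =>
    rw [Finset.sum_cons]
    have := RepC.add (h j (Finset.mem_cons_self j s)) (ih (fun j' hj' => h j' (Finset.mem_cons.mpr (Or.inr hj'))))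
    convert this using 1
    funext d
    rw [Finset.sum_cons]

lemma congr_fun {S : Finset (Fin K)} {f g : ℕ → ℂ} {μ : ℂ} (h : ∀ d, f d = g d)
    (hf : RepC cc S f μ) : RepC cc S g μ := by
  obtain ⟨ι, inst, n, c, hn, hs, e⟩ := hf
  refine ⟨ι, inst, n, c, hn, hs, fun d => ?_⟩
  beta_reduce
  rw [← h d]
  exact e d

end RepC

/-- **Approaching the interference-free SNR.** If `1, cos θ₁, …, cos θ_K` are
linearly independent over `ℚ`, then for every `δ > 0` there is a positive
integer antenna separation `d` such that the SINR of the desired user `i`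
exceeds the interference-free SNR `Pᵢ/σ²` minus `δ`. -/
theorem sinr_approaches_interference_free_snr (K : ℕ) (hK : 1 ≤ K)
    (θ : Fin K → ℝ)
    (hind : ∀ (q₀ : ℚ) (q : Fin K → ℚ),
      (q₀ : ℝ) + ∑ k, (q k : ℝ) * Real.cos (θ k) = 0 → q₀ = 0 ∧ ∀ k, q k = 0)
    (i : Fin K) (P : Fin K → ℝ) (hP : ∀ k, 0 < P k) (σ : ℝ) (hσ : 0 < σ) :
    ∀ δ : ℝ, 0 < δ → ∃ d : ℕ, 0 < d ∧
      P i * arrayGain (θ i) d /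
          ((∑ k ∈ Finset.univ.erase i, P k * arrayGain (θ k) d) + σ ^ 2)
        > P i / σ ^ 2 - δ := by
  intro δ hδ
  classical
  set cc : Fin K → ℝ := fun k => Real.cos (θ k) with hcc
  -- irrationality of nonzero integer combinations
  have hirr : ∀ n : Fin K → ℤ, n ≠ 0 → ∀ z : ℤ, (∑ k, (n k : ℝ) * cc k) ≠ (z : ℝ) := by
    intro n hn z hz
    have h0 : ((-(z:ℚ) : ℚ) : ℝ) + ∑ k, (((n k : ℚ)) : ℝ) * Real.cos (θ k) = 0 := by
      push_cast
      rw [show (∑ k, (n k : ℝ) * Real.cos (θ k)) = ∑ k, (n k : ℝ) * cc k from rfl, hz]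
      ring
    have := (hind (-(z:ℚ)) (fun k => (n k : ℚ)) h0).2
    apply hn
    funext k
    exact_mod_cast this k
  -- basic positivity facts
  have hσ2 : (0:ℝ) < σ ^ 2 := by positivity
  have hAG : ∀ k (d : ℕ), 0 ≤ arrayGain (θ k) d := by
    intro k d
    unfold arrayGain
    nlinarith [Real.neg_one_le_cos (2 * Real.pi * d * Real.cos (θ k))]
  have hGf : ∀ x, 0 ≤ Gf x := by
    intro x; unfold Gf; nlinarith [Real.neg_one_le_cos (2 * Real.pi * x)]
  have hGf' : ∀ x, 0 ≤ Gf' x := by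
    intro x; unfold Gf'; nlinarith [Real.cos_le_one (2 * Real.pi * x)]
  have hAGf : ∀ k (d : ℕ), arrayGain (θ k) d = Gf ((d:ℝ) * cc k) := by
    intro k d
    unfold arrayGain Gf
    rw [show 2 * Real.pi * ((d:ℝ) * cc k) = 2 * Real.pi * (d:ℝ) * Real.cos (θ k) from by
      rw [hcc]; ring]
  -- reduced δ and target slope γ
  set δ' : ℝ := min δ (P i / (2 * σ ^ 2)) with hδ'def
  have hδ'pos : 0 < δ' := lt_min hδ (div_pos (hP i) (by positivity))
  have hδ'le : δ' ≤ δ := min_le_left _ _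
  set γ : ℝ := P i / σ ^ 2 - δ' with hγdef
  have hγpos : 0 < γ := by
    have h1 : δ' ≤ P i / (2 * σ ^ 2) := min_le_right _ _
    have h2 : P i / (2 * σ ^ 2) < P i / σ ^ 2 := by
      apply div_lt_div_of_pos_left (hP i) hσ2
      linarith
    simp only [hγdef]
    linarith
  set Psum : ℝ := ∑ j ∈ Finset.univ.erase i, P j with hPsumdef
  have hPsumnonneg : 0 ≤ Psum := Finset.sum_nonneg (fun j _ => (hP j).le)
  -- choose m
  obtain ⟨m, hm⟩ : ∃ m : ℕ, P i + γ * Psum < δ' * σ ^ 2 * (2 * m + 2) := by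
    obtain ⟨m, hm⟩ := exists_nat_gt ((P i + γ * Psum) / (δ' * σ ^ 2))
    refine ⟨m, ?_⟩
    have hpos : (0:ℝ) < δ' * σ ^ 2 := by positivity
    rw [div_lt_iff₀ hpos] at hm
    nlinarith [hpos]
  -- the three families of single-variable profiles
  set h0 : Fin K → ℝ → ℝ := fun k => if k = i then (fun x => Gf x ^ (m+1)) else (fun x => Gf' x ^ m) with hh0
  set hJ : Fin K → Fin K → ℝ → ℝ := fun j k => if k = i then (fun x => Gf x ^ m) else
    if k = j then (fun x => Gf x * Gf' x ^ m) else (fun x => Gf' x ^ m) with hhJ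
  set hL : Fin K → ℝ → ℝ := fun k => if k = i then (fun x => Gf x ^ m) else (fun x => Gf' x ^ m) with hhL
  have hh0i : h0 i = fun x => Gf x ^ (m+1) := by rw [hh0]; simp
  have hh0ne : ∀ k, k ≠ i → h0 k = fun x => Gf' x ^ m := by
    intro k hk; rw [hh0]; simp [hk]
  have hhJi : ∀ j, hJ j i = fun x => Gf x ^ m := by intro j; rw [hhJ]; simp
  have hhJj : ∀ j, j ≠ i → hJ j j = fun x => Gf x * Gf' x ^ m := by
    intro j hj; rw [hhJ]; simp [hj]
  have hhJne : ∀ j k, k ≠ i → k ≠ j → hJ j k = fun x => Gf' x ^ m := by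
    intro j k hk hkj; rw [hhJ]; simp [hk, hkj]
  have hhLi : hL i = fun x => Gf x ^ m := by rw [hhL]; simp
  have hhLne : ∀ k, k ≠ i → hL k = fun x => Gf' x ^ m := by
    intro k hk; rw [hhL]; simp [hk]
  have hTPR0 : ∀ k, TPR (h0 k) := by
    intro k; by_cases hk : k = i
    · rw [hk, hh0i]; exact TPR.G.pow (m+1)
    · rw [hh0ne k hk]; exact TPR.G'.pow m
  have hTPRJ : ∀ j k, TPR (hJ j k) := by
    intro j k
    by_cases hk : k = i
    · rw [hk, hhJi]; exact TPR.G.pow m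
    · by_cases hkj : k = j
      · rcases eq_or_ne j i with rfl | hji
        · rw [hkj, hhJi]; exact TPR.G.pow m
        · rw [hkj, hhJj j hji]; exact TPR.G.mul (TPR.G'.pow m)
      · rw [hhJne j k hk hkj]; exact TPR.G'.pow m
  have hTPRL : ∀ k, TPR (hL k) := by
    intro k; by_cases hk : k = i
    · rw [hk, hhLi]; exact TPR.G.pow m
    · rw [hhLne k hk]; exact TPR.G'.pow m
  -- integrals of the profiles
  have hintG' : (∫ x in (0:ℝ)..1, Gf' x ^ m) = aW m := by rw [← bW_eq_aW]; rfl
  have hI0 : ∀ k, (∫ x in (0:ℝ)..1, h0 k x) = if k = i then aW (m+1) else aW m := by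
    intro k
    by_cases hk : k = i
    · rw [if_pos hk, hk, hh0i]; rfl
    · rw [if_neg hk, hh0ne k hk]; exact hintG'
  have hIJ : ∀ j, j ≠ i → ∀ k, (∫ x in (0:ℝ)..1, hJ j k x)
      = if k = i then aW m else if k = j then aW m - aW (m+1) else aW m := by
    intro j hji k
    by_cases hk : k = i
    · rw [if_pos hk, hk, hhJi]; rfl
    · rw [if_neg hk]
      by_cases hkj : k = j
      · rw [if_pos hkj, hkj, hhJj j hji]
        exact int_G_G'_pow m
      · rw [if_neg hkj, hhJne j k hk hkj]; exact hintG'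
  have hIL : ∀ k, (∫ x in (0:ℝ)..1, hL k x) = aW m := by
    intro k
    by_cases hk : k = i
    · rw [hk, hhLi]; rfl
    · rw [hhLne k hk]; exact hintG'
  -- the weighted objective Φ
  set Φ : ℕ → ℝ := fun d =>
    P i * ∏ k, h0 k ((d:ℝ) * cc k)
      - γ * ((∑ j ∈ Finset.univ.erase i, P j * ∏ k, hJ j k ((d:ℝ) * cc k))
        + σ^2 * ∏ k, hL k ((d:ℝ) * cc k)) with hΦ
  -- representation of Φ with constant term μc
  have hbig : RepC cc Finset.univ
      (fun d : ℕ => ((P i : ℝ):ℂ) * ∏ k, ((h0 k ((d:ℝ) * cc k) : ℝ):ℂ)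
        - ((γ : ℝ):ℂ) * ((∑ j ∈ Finset.univ.erase i,
            ((P j : ℝ):ℂ) * ∏ k, ((hJ j k ((d:ℝ) * cc k) : ℝ):ℂ))
          + ((σ^2 : ℝ):ℂ) * ∏ k, ((hL k ((d:ℝ) * cc k) : ℝ):ℂ)))
      (((P i : ℝ):ℂ) * ∏ k, ((∫ x in (0:ℝ)..1, h0 k x : ℝ):ℂ)
        - ((γ : ℝ):ℂ) * ((∑ j ∈ Finset.univ.erase i,
            ((P j : ℝ):ℂ) * ∏ k, ((∫ x in (0:ℝ)..1, hJ j k x : ℝ):ℂ))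
          + ((σ^2 : ℝ):ℂ) * ∏ k, ((∫ x in (0:ℝ)..1, hL k x : ℝ):ℂ))) := by
    apply RepC.sub
    · exact RepC.smul _ (RepC.prodR hTPR0 Finset.univ)
    · apply RepC.smul
      apply RepC.add
      · exact RepC.finsum _ _ _ _
          (fun j _ => RepC.smul _ (RepC.prodR (hTPRJ j) Finset.univ))
      · exact RepC.smul _ (RepC.prodR hTPRL Finset.univ)
  -- compute the products of integrals
  set E : ℝ := ∏ _k ∈ Finset.univ.erase i, aW m with hE
  have hEpos : 0 < E := Finset.prod_pos (fun _ _ => aW_pos m)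
  have hprod0 : (∏ k, (∫ x in (0:ℝ)..1, h0 k x)) = aW (m+1) * E := by
    rw [← Finset.mul_prod_erase Finset.univ _ (Finset.mem_univ i), hI0 i, if_pos rfl, hE]
    congr 1
    exact Finset.prod_congr rfl (fun k hk => by
      rw [hI0 k, if_neg (Finset.ne_of_mem_erase hk)])
  have hprodL : (∏ k, (∫ x in (0:ℝ)..1, hL k x)) = aW m * E := by
    rw [← Finset.mul_prod_erase Finset.univ _ (Finset.mem_univ i), hIL i, hE]
    congr 1
    exact Finset.prod_congr rfl (fun k _ => hIL k)
  have hprodJ : ∀ j ∈ Finset.univ.erase i,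
      (∏ k, (∫ x in (0:ℝ)..1, hJ j k x)) = (aW m - aW (m+1)) * E := by
    intro j hj
    have hji : j ≠ i := Finset.ne_of_mem_erase hj
    rw [← Finset.mul_prod_erase Finset.univ _ (Finset.mem_univ i), hIJ j hji i, if_pos rfl]
    have h2 : (∏ k ∈ Finset.univ.erase i, (∫ x in (0:ℝ)..1, hJ j k x))
        = (aW m - aW (m+1)) * ∏ _k ∈ (Finset.univ.erase i).erase j, aW m := by
      rw [← Finset.mul_prod_erase _ _ hj, hIJ j hji j, if_neg hji, if_pos rfl]
      congr 1
      apply Finset.prod_congr rfl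
      intro k hk
      have hkj : k ≠ j := Finset.ne_of_mem_erase hk
      have hki : k ≠ i := Finset.ne_of_mem_erase (Finset.mem_of_mem_erase hk)
      rw [hIJ j hji k, if_neg hki, if_neg hkj]
    rw [h2, hE, ← Finset.mul_prod_erase _ _ hj]
    ring
  -- the real constant term
  set μR : ℝ := P i * (aW (m+1) * E)
      - γ * ((Psum * ((aW m - aW (m+1)) * E)) + σ^2 * (aW m * E)) with hμR
  have hrepΦ : RepC cc Finset.univ (fun d : ℕ => ((Φ d : ℝ):ℂ)) ((μR : ℝ):ℂ) := by
    have heq1 : (((P i : ℝ):ℂ) * ∏ k, ((∫ x in (0:ℝ)..1, h0 k x : ℝ):ℂ)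
        - ((γ : ℝ):ℂ) * ((∑ j ∈ Finset.univ.erase i,
            ((P j : ℝ):ℂ) * ∏ k, ((∫ x in (0:ℝ)..1, hJ j k x : ℝ):ℂ))
          + ((σ^2 : ℝ):ℂ) * ∏ k, ((∫ x in (0:ℝ)..1, hL k x : ℝ):ℂ))) = ((μR : ℝ):ℂ) := by
      rw [hμR]
      rw [show (∏ k, ((∫ x in (0:ℝ)..1, h0 k x : ℝ):ℂ)) = ((aW (m+1) * E : ℝ):ℂ) from by
        rw [← Complex.ofReal_prod, hprod0]]
      rw [show (∏ k, ((∫ x in (0:ℝ)..1, hL k x : ℝ):ℂ)) = ((aW m * E : ℝ):ℂ) from by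
        rw [← Complex.ofReal_prod, hprodL]]
      have hsum : ∑ j ∈ Finset.univ.erase i,
          ((P j : ℝ):ℂ) * ∏ k, ((∫ x in (0:ℝ)..1, hJ j k x : ℝ):ℂ)
          = ((Psum * ((aW m - aW (m+1)) * E) : ℝ):ℂ) := by
        rw [hPsumdef]
        push_cast
        rw [Finset.sum_mul]
        apply Finset.sum_congr rfl
        intro j hj
        rw [← Complex.ofReal_prod, hprodJ j hj]
        push_cast
        ring
      rw [hsum]
      push_cast
      ring
    rw [← heq1]
    apply RepC.congr_fun _ hbig
    intro d
    rw [hΦ]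
    push_cast
    ring
  -- positivity of the constant term
  have hμRpos : 0 < μR := by
    rw [hμR, aW_succ m]
    have ha := aW_pos m
    have hv : (0:ℝ) < 1/(2*(m:ℝ)+2) := by positivity
    have hu : (2*(m:ℝ)+1)/(2*(m:ℝ)+2) = 1 - 1/(2*(m:ℝ)+2) := by
      field_simp
      ring
    have hγσ : γ * σ^2 = P i - δ' * σ^2 := by
      rw [hγdef]; field_simp
    have h5 : (1/(2*(m:ℝ)+2)) * (P i + γ * Psum) < δ' * σ^2 := by
      have h6 : (1/(2*(m:ℝ)+2)) * (P i + γ * Psum)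
          < (1/(2*(m:ℝ)+2)) * (δ' * σ^2 * (2*(m:ℝ)+2)) := by
        exact mul_lt_mul_of_pos_left hm hv
      have h7 : (1/(2*(m:ℝ)+2)) * (δ' * σ^2 * (2*(m:ℝ)+2)) = δ' * σ^2 := by
        field_simp
      linarith
    have hX : P i * ((2*(m:ℝ)+1)/(2*(m:ℝ)+2) * aW m * E)
        - γ * ((Psum * ((aW m - (2*(m:ℝ)+1)/(2*(m:ℝ)+2) * aW m) * E)) + σ^2 * (aW m * E))
        = (aW m * E) * (δ' * σ^2 - (1/(2*(m:ℝ)+2)) * (P i + γ * Psum)) := by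
      rw [hu]
      linear_combination (-(aW m * E)) * hγσ
    rw [hX]
    exact mul_pos (mul_pos ha hEpos) (by linarith)
  -- Cesàro averages of Φ converge to μR > 0
  have hT := RepC.tendsto hirr hrepΦ
  have h2 : (fun N : ℕ => (∑ d ∈ Finset.Icc 1 N, ((Φ d : ℝ):ℂ))/(N:ℂ))
      = fun N : ℕ => ((((∑ d ∈ Finset.Icc 1 N, Φ d)/N : ℝ)) : ℂ) := by
    funext N; push_cast; ring
  rw [h2] at hT
  have hTR : Filter.Tendsto (fun N : ℕ => (∑ d ∈ Finset.Icc 1 N, Φ d)/(N:ℝ))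
      Filter.atTop (nhds μR) := by
    have h3 := (Complex.continuous_re.tendsto _).comp hT
    simpa [Function.comp_def] using h3
  have hev := hTR.eventually (lt_mem_nhds hμRpos)
  obtain ⟨N, hN⟩ := (hev.and (Filter.eventually_ge_atTop 1)).exists
  obtain ⟨hNpos, hN1⟩ := hN
  have hNR : (0:ℝ) < N := by exact_mod_cast Nat.lt_of_lt_of_le Nat.zero_lt_one hN1
  have hsumpos : 0 < ∑ d ∈ Finset.Icc 1 N, Φ d := by
    by_contra hcon
    push_neg at hcon
    have : (∑ d ∈ Finset.Icc 1 N, Φ d)/(N:ℝ) ≤ 0 := div_nonpos_iff.mpr (Or.inr ⟨hcon, hNR.le⟩)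
    linarith
  have hexd : ∃ d ∈ Finset.Icc 1 N, 0 < Φ d := by
    by_contra hcon
    push_neg at hcon
    have : ∑ d ∈ Finset.Icc 1 N, Φ d ≤ 0 := Finset.sum_nonpos hcon
    linarith
  obtain ⟨d, hdmem, hΦd⟩ := hexd
  have hd1 : 1 ≤ d := (Finset.mem_Icc.mp hdmem).1
  -- factorization of Φ d
  set w : ℝ := Gf ((d:ℝ) * cc i) ^ m * ∏ k ∈ Finset.univ.erase i, Gf' ((d:ℝ) * cc k) ^ m with hwdef
  have hw : 0 ≤ w :=
    mul_nonneg (pow_nonneg (hGf _) m)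
      (Finset.prod_nonneg (fun k _ => pow_nonneg (hGf' _) m))
  have hp0 : (∏ k, h0 k ((d:ℝ) * cc k)) = Gf ((d:ℝ) * cc i) * w := by
    rw [← Finset.mul_prod_erase Finset.univ _ (Finset.mem_univ i)]
    rw [show h0 i ((d:ℝ) * cc i) = Gf ((d:ℝ) * cc i) ^ (m+1) from congrFun hh0i _]
    rw [Finset.prod_congr rfl (fun k hk =>
      congrFun (hh0ne k (Finset.ne_of_mem_erase hk)) ((d:ℝ) * cc k))]
    rw [hwdef, pow_succ]
    ring
  have hpL : (∏ k, hL k ((d:ℝ) * cc k)) = w := by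
    rw [← Finset.mul_prod_erase Finset.univ _ (Finset.mem_univ i)]
    rw [show hL i ((d:ℝ) * cc i) = Gf ((d:ℝ) * cc i) ^ m from congrFun hhLi _]
    rw [Finset.prod_congr rfl (fun k hk =>
      congrFun (hhLne k (Finset.ne_of_mem_erase hk)) ((d:ℝ) * cc k))]
  have hpJ : ∀ j ∈ Finset.univ.erase i,
      (∏ k, hJ j k ((d:ℝ) * cc k)) = Gf ((d:ℝ) * cc j) * w := by
    intro j hj
    have hji : j ≠ i := Finset.ne_of_mem_erase hj
    rw [← Finset.mul_prod_erase Finset.univ _ (Finset.mem_univ i)]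
    rw [show hJ j i ((d:ℝ) * cc i) = Gf ((d:ℝ) * cc i) ^ m from congrFun (hhJi j) _]
    rw [← Finset.mul_prod_erase _ _ hj]
    rw [show hJ j j ((d:ℝ) * cc j) = Gf ((d:ℝ) * cc j) * Gf' ((d:ℝ) * cc j) ^ m from
      congrFun (hhJj j hji) _]
    rw [Finset.prod_congr rfl (fun k hk =>
      congrFun (hhJne j k (Finset.ne_of_mem_erase (Finset.mem_of_mem_erase hk))
        (Finset.ne_of_mem_erase hk)) ((d:ℝ) * cc k))]
    rw [hwdef, ← Finset.mul_prod_erase _ _ hj]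
    ring
  have hfac : Φ d = w * (P i * Gf ((d:ℝ) * cc i)
      - γ * ((∑ k ∈ Finset.univ.erase i, P k * Gf ((d:ℝ) * cc k)) + σ^2)) := by
    rw [hΦ]
    beta_reduce
    rw [hp0, hpL]
    rw [Finset.sum_congr rfl (fun j hj => by rw [hpJ j hj])]
    rw [show (∑ j ∈ Finset.univ.erase i, P j * (Gf ((d:ℝ) * cc j) * w))
        = (∑ j ∈ Finset.univ.erase i, P j * Gf ((d:ℝ) * cc j)) * w by
      rw [Finset.sum_mul]; exact Finset.sum_congr rfl (fun j _ => by ring)]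
    ring
  -- conclude
  have hXpos : 0 < P i * Gf ((d:ℝ) * cc i)
      - γ * ((∑ k ∈ Finset.univ.erase i, P k * Gf ((d:ℝ) * cc k)) + σ^2) := by
    by_contra hcon
    push_neg at hcon
    have := mul_nonpos_of_nonneg_of_nonpos hw hcon
    rw [← hfac] at this
    linarith
  have hDpos : 0 < (∑ k ∈ Finset.univ.erase i, P k * arrayGain (θ k) d) + σ^2 := by
    have : 0 ≤ ∑ k ∈ Finset.univ.erase i, P k * arrayGain (θ k) d :=
      Finset.sum_nonneg (fun k _ => mul_nonneg (hP k).le (hAG k d))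
    linarith
  refine ⟨d, by omega, ?_⟩
  have hDeq : (∑ k ∈ Finset.univ.erase i, P k * arrayGain (θ k) d) + σ^2
      = (∑ k ∈ Finset.univ.erase i, P k * Gf ((d:ℝ) * cc k)) + σ^2 := by
    congr 1
    exact Finset.sum_congr rfl (fun k _ => by rw [hAGf k d])
  have hγlt : γ < P i * arrayGain (θ i) d /
      ((∑ k ∈ Finset.univ.erase i, P k * arrayGain (θ k) d) + σ^2) := by
    rw [lt_div_iff₀ hDpos, hDeq, hAGf i d]
    linarith
  have : P i / σ^2 - δ ≤ γ := by rw [hγdef]; linarith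
  linarith
end Rep
end

section
/- Consider a specular multipath interference channel seen at receiver i: for each transmitter j ∈ {1, ..., K} there are finitely many paths with angles of arrival θ_{j,1}, ..., θ_{j,L_j}. Assume that 1 together with the full collection of cosines {cos(θ_{j,ℓ}) : 1 ≤ j ≤ K, 1 ≤ ℓ ≤ L_j} is linearly independent over ℚ. Then for every δ > 0 there exists a positive integer d such that simultaneously g(θ_{i,ℓ}; d) > 1 − δ for every desired path ℓ ∈ {1, ..., L_i}, and g(θ_{j,ℓ}; d) < δ for every j ≠ i and every ℓ ∈ {1, ..., L_j}, where g(θ; d) := (1 + cos(2π·d·cos θ))/2. -/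
open Finset Complex Filter

noncomputable def toE (t : ℝ) : ℂ := Complex.exp (2 * Real.pi * t * Complex.I)

lemma toE_add (a b : ℝ) : toE (a + b) = toE a * toE b := by
  rw [toE, toE, toE, ← Complex.exp_add]; push_cast; ring_nf

lemma toE_zero : toE 0 = 1 := by simp [toE]

lemma toE_pow (t : ℝ) (k : ℕ) : toE t ^ k = toE (k * t) := by
  rw [toE, toE, ← Complex.exp_nat_mul]; push_cast; ring_nf

lemma norm_toE (t : ℝ) : ‖toE t‖ = 1 := by
  rw [toE]
  have : (2 * (Real.pi:ℂ) * (t:ℝ) * Complex.I) = ((2 * Real.pi * t : ℝ) : ℂ) * Complex.I := by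
    push_cast; ring
  rw [this, Complex.norm_exp_ofReal_mul_I]

lemma toE_eq_one_iff (t : ℝ) : toE t = 1 ↔ ∃ k : ℤ, t = k := by
  rw [toE, Complex.exp_eq_one_iff]
  constructor
  · rintro ⟨n, hn⟩
    refine ⟨n, ?_⟩
    have h2 : (2 * (Real.pi:ℂ) * Complex.I) ≠ 0 := by
      simp [Real.pi_ne_zero, Complex.I_ne_zero, Complex.ofReal_ne_zero]
    have : (t:ℂ) * (2 * (Real.pi:ℂ) * Complex.I) = (n:ℂ) * (2 * (Real.pi:ℂ) * Complex.I) := by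
      rw [← hn]; ring
    have := mul_right_cancel₀ h2 this
    exact_mod_cast this
  · rintro ⟨k, rfl⟩; exact ⟨k, by push_cast; ring⟩

lemma toE_sum {ι : Type*} (s : Finset ι) (f : ι → ℝ) :
    toE (∑ p ∈ s, f p) = ∏ p ∈ s, toE (f p) := by
  classical
  induction s using Finset.induction with
  | empty => simp [toE_zero]
  | @insert a s h ih => rw [Finset.sum_insert h, Finset.prod_insert h, toE_add, ih]

lemma geom_bound {z : ℂ} (hz : ‖z‖ = 1) (h1 : z ≠ 1) (N : ℕ) :
    ‖∑ n ∈ range N, z ^ (n + 1)‖ ≤ 2 / ‖1 - z‖ := by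
  have hz1 : ‖1 - z‖ ≠ 0 := by simpa [sub_eq_zero] using fun h => h1 h.symm
  have hpos : (0:ℝ) < ‖1 - z‖ := lt_of_le_of_ne (norm_nonneg _) (Ne.symm hz1)
  have key : ∑ n ∈ range N, z ^ (n + 1) = z * ((z ^ N - 1) / (z - 1)) := by
    rw [← geom_sum_eq h1 N, Finset.mul_sum]
    exact Finset.sum_congr rfl fun n _ => by ring
  rw [key, norm_mul, hz, one_mul, norm_div, norm_sub_rev z 1]
  have h2 : ‖z ^ N - 1‖ ≤ 2 := by
    calc ‖z ^ N - 1‖ ≤ ‖z ^ N‖ + ‖(1:ℂ)‖ := norm_sub_le _ _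
    _ ≤ 2 := by rw [norm_pow, hz]; norm_num
  gcongr

lemma cos_factor (s t : ℝ) (hs : s = 1 ∨ s = -1) :
    (((1 + s * Real.cos (2 * Real.pi * t)) / 2 : ℝ) : ℂ)
      = (1 + (s:ℂ) * toE t) * (1 + (s:ℂ) * toE (-t)) / 4 := by
  have hσ : (s:ℂ)^2 = 1 := by rcases hs with h | h <;> simp [h]
  have h1 : toE t * toE (-t) = 1 := by rw [← toE_add]; simp [toE_zero]
  have h2 : toE t + toE (-t) = 2 * ((Real.cos (2 * Real.pi * t) : ℝ) : ℂ) := by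
    rw [toE, toE]
    have e1 : 2 * (Real.pi:ℂ) * (t:ℝ) * Complex.I = ((2 * Real.pi * t : ℝ) : ℂ) * Complex.I := by
      push_cast; ring
    have e2 : 2 * (Real.pi:ℂ) * ((-t:ℝ):ℂ) * Complex.I
        = -(((2 * Real.pi * t : ℝ) : ℂ)) * Complex.I := by push_cast; ring
    rw [e1, e2, Complex.exp_mul_I, Complex.exp_mul_I, Complex.cos_neg, Complex.sin_neg,
      Complex.ofReal_cos]
    ring
  have expand : (1 + (s:ℂ) * toE t) * (1 + (s:ℂ) * toE (-t))
      = 1 + (s:ℂ) * (toE t + toE (-t)) + (s:ℂ)^2 * (toE t * toE (-t)) := by ring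
  rw [expand, h1, h2, hσ]
  push_cast
  ring

lemma binom_expand (σ w : ℂ) (m : ℕ) :
    (1 + σ * w) ^ m = ∑ a ∈ range (m+1), σ ^ a * (m.choose a : ℂ) * w ^ a := by
  rw [add_comm, add_pow]
  exact Finset.sum_congr rfl fun a _ => by rw [mul_pow]; ring

lemma kronecker_signs {ι : Type*} [Fintype ι] [DecidableEq ι] (x : ι → ℝ) (s : ι → ℝ)
    (hs : ∀ p, s p = 1 ∨ s p = -1)
    (hirr : ∀ c : ι → ℤ, (∃ k : ℤ, ∑ p, (c p : ℝ) * x p = (k:ℝ)) → ∀ p, c p = 0)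
    {ε : ℝ} (hε : 0 < ε) (hε1 : ε < 1) :
    ∃ d : ℕ, 0 < d ∧ ∀ p, s p * Real.cos (2 * Real.pi * ((d:ℝ) * x p)) > 1 - ε := by
  classical
  set c := Fintype.card ι with hc
  set r : ℝ := 1 - ε / 2 with hrdef
  have hr0 : 0 < r := by rw [hrdef]; linarith
  have hr1 : r < 1 := by rw [hrdef]; linarith
  -- choose m with (m+1)^c * r^m < 1
  obtain ⟨m, hm⟩ : ∃ m : ℕ, ((m:ℝ)+1)^c * r^m < 1 := by
    have ht := tendsto_pow_const_mul_const_pow_of_abs_lt_one c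
      (show |r| < 1 by rw [abs_of_pos hr0]; exact hr1)
    have hev : ∀ᶠ n : ℕ in atTop, (n:ℝ)^c * r^n < r :=
      ht.eventually (gt_mem_nhds hr0)
    obtain ⟨M, hM⟩ := hev.exists_forall_of_atTop
    refine ⟨M, ?_⟩
    have h1 := hM (M+1) (by omega)
    have : ((M:ℝ)+1)^c * r^M * r < r := by
      push_cast at h1
      calc ((M:ℝ)+1)^c * r^M * r = ((M:ℝ)+1)^c * r^(M+1) := by rw [pow_succ]; ring
      _ < r := h1
    nlinarith [pow_nonneg hr0.le M, pow_nonneg (by positivity : (0:ℝ) ≤ (M:ℝ)+1) c]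
  -- the basic objects
  set σ : ι → ℂ := fun p => ((s p : ℝ) : ℂ) with hσdef
  set F : ℕ → ℝ := fun n => ∏ p, ((1 + s p * Real.cos (2*Real.pi*((n:ℝ) * x p)))/2)^m with hF
  set G : Finset (ι → ℕ × ℕ) :=
    Fintype.piFinset (fun _ : ι => range (m+1) ×ˢ range (m+1)) with hG
  set W : (ι → ℕ × ℕ) → ℂ := fun g =>
    (∏ p, σ p ^ ((g p).1 + (g p).2) * ((m.choose (g p).1 : ℕ) : ℂ)
      * ((m.choose (g p).2 : ℕ) : ℂ)) / 4^(m*c) with hW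
  set α : (ι → ℕ × ℕ) → ℝ := fun g => ∑ p, (((g p).1 : ℝ) - (((g p).2 : ℕ) : ℝ)) * x p with hα
  -- Step A : expansion
  have stepA : ∀ n : ℕ, (F n : ℂ) = ∑ g ∈ G, W g * toE (α g) ^ n := by
    intro n
    set T : (p : ι) → ℕ × ℕ → ℂ := fun p q =>
      (σ p ^ q.1 * ((m.choose q.1 : ℕ) : ℂ) * toE ((q.1:ℝ) * ((n:ℝ) * x p)))
        * (σ p ^ q.2 * ((m.choose q.2 : ℕ) : ℂ) * toE ((q.2:ℝ) * (-((n:ℝ) * x p)))) with hT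
    have e0 : (F n : ℂ)
        = ∏ p, (((1 + s p * Real.cos (2*Real.pi*((n:ℝ) * x p)))/2 : ℝ) : ℂ)^m := by
      rw [hF, Complex.ofReal_prod]
      exact prod_congr rfl fun p _ => Complex.ofReal_pow _ _
    have e1 : (F n : ℂ) = ∏ p,
        ((∑ q ∈ range (m+1) ×ˢ range (m+1), T p q) / 4^m) := by
      rw [e0]
      refine prod_congr rfl fun p _ => ?_
      rw [cos_factor (s p) ((n:ℝ) * x p) (hs p)]
      rw [div_pow, mul_pow, binom_expand, binom_expand, sum_mul_sum, ← Finset.sum_product']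
      congr 1
      refine Finset.sum_congr rfl fun q _ => ?_
      simp only [hT, toE_pow]; rfl
    have e2 : (F n : ℂ) = (∑ g ∈ G, ∏ p, T p (g p)) / 4^(m*c) := by
      rw [e1, prod_div_distrib, prod_const, ← pow_mul, prod_univ_sum, Finset.card_univ]
    rw [e2, sum_div]
    refine Finset.sum_congr rfl fun g hg => ?_
    have e3 : ∏ p, T p (g p)
        = (∏ p, σ p ^ ((g p).1 + (g p).2) * ((m.choose (g p).1 : ℕ) : ℂ)
            * ((m.choose (g p).2 : ℕ) : ℂ)) * toE ((n:ℝ) * α g) := by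
      have : ∀ p, T p (g p) = (σ p ^ ((g p).1 + (g p).2) * ((m.choose (g p).1 : ℕ) : ℂ)
          * ((m.choose (g p).2 : ℕ) : ℂ))
          * toE ((((g p).1:ℝ) - ((g p).2:ℝ)) * ((n:ℝ) * x p)) := by
        intro p
        rw [hT]
        have : ((((g p).1:ℝ) - ((g p).2:ℝ)) * ((n:ℝ) * x p))
            = ((g p).1:ℝ) * ((n:ℝ) * x p) + ((g p).2:ℝ) * (-((n:ℝ) * x p)) := by ring
        rw [this, toE_add, pow_add]
        ring
      rw [Finset.prod_congr rfl (fun p _ => this p), prod_mul_distrib, ← toE_sum]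
      refine congrArg _ (congrArg toE ?_)
      rw [hα, Finset.mul_sum]
      exact Finset.sum_congr rfl fun p _ => by ring
    rw [e3, toE_pow]
    ring
  -- basic sign facts
  have hσ2 : ∀ p, σ p ^ 2 = 1 := by
    intro p; rcases hs p with h | h <;> simp [hσdef, h]
  -- diagonal / nondiagonal split
  set Pd : (ι → ℕ × ℕ) → Prop := fun g => ∀ p, (g p).1 = (g p).2 with hPd
  set Gd : Finset (ι → ℕ × ℕ) := G.filter Pd with hGd
  set Gn : Finset (ι → ℕ × ℕ) := G.filter (fun g => ¬ Pd g) with hGn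
  set D : ℝ := (∑ a ∈ Fintype.piFinset (fun _ : ι => range (m+1)),
      ∏ p, (((m.choose (a p) : ℕ)) : ℝ)^2) / 4^(m*c) with hDdef
  -- diagonal sum equals D
  have hDsum : ∑ g ∈ Gd, W g = ((D : ℝ) : ℂ) := by
    have hDc : ((D : ℝ) : ℂ) = ∑ a ∈ Fintype.piFinset (fun _ : ι => range (m+1)),
        (∏ p, (((m.choose (a p) : ℕ)) : ℂ)^2) / 4^(m*c) := by
      rw [hDdef, Finset.sum_div, Complex.ofReal_sum]
      refine Finset.sum_congr rfl fun a _ => ?_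
      push_cast
      ring
    rw [hDc]
    refine Finset.sum_nbij' (fun g => fun p => (g p).1) (fun a => fun p => (a p, a p))
      ?_ ?_ ?_ ?_ ?_
    · intro g hg
      rw [hGd, Finset.mem_filter, hG, Fintype.mem_piFinset] at hg
      rw [Fintype.mem_piFinset]
      intro p
      exact (Finset.mem_product.1 (hg.1 p)).1
    · intro a ha
      rw [Fintype.mem_piFinset] at ha
      rw [hGd, Finset.mem_filter]
      constructor
      · rw [hG, Fintype.mem_piFinset]
        intro p
        exact Finset.mem_product.2 ⟨ha p, ha p⟩
      · intro p; rfl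
    · intro g hg
      rw [hGd, Finset.mem_filter] at hg
      funext p
      exact (congrArg (Prod.mk (g p).1) (hg.2 p)).trans rfl
    · intro a _; rfl
    · intro g hg
      rw [hGd, Finset.mem_filter] at hg
      simp only [hW]
      congr 1
      refine Finset.prod_congr rfl fun p _ => ?_
      have h2 : (g p).2 = (g p).1 := (hg.2 p).symm
      rw [h2, ← two_mul, pow_mul, hσ2 p, one_pow, one_mul, sq]
  -- nondiagonal frequencies are nontrivial
  have hnz : ∀ g ∈ Gn, toE (α g) ≠ 1 := by
    intro g hg h1
    rw [toE_eq_one_iff] at h1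
    obtain ⟨k, hk⟩ := h1
    have hall := hirr (fun p => ((g p).1 : ℤ) - ((g p).2 : ℤ))
      ⟨k, by
        rw [← hk, hα]
        exact Finset.sum_congr rfl fun p _ => by push_cast; ring⟩
    rw [hGn, Finset.mem_filter] at hg
    refine hg.2 ?_
    intro p
    have h2 : ((g p).1 : ℤ) - ((g p).2 : ℤ) = 0 := hall p
    omega
  set E : ℝ := ∑ g ∈ Gn, ‖W g‖ * (2 / ‖1 - toE (α g)‖) with hE
  -- key average inequality
  have key : ∀ N : ℕ, (N:ℝ) * D - E ≤ ∑ n ∈ range N, F (n+1) := by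
    intro N
    have hsplit : ((∑ n ∈ range N, F (n+1) : ℝ) : ℂ)
        = (N:ℝ) * D + ∑ g ∈ Gn, W g * ∑ n ∈ range N, toE (α g) ^ (n+1) := by
      rw [Complex.ofReal_sum]
      calc ∑ n ∈ range N, ((F (n+1) : ℝ) : ℂ)
          = ∑ n ∈ range N, ∑ g ∈ G, W g * toE (α g) ^ (n+1) :=
            Finset.sum_congr rfl fun n _ => stepA (n+1)
        _ = ∑ g ∈ G, W g * ∑ n ∈ range N, toE (α g) ^ (n+1) := by
            rw [Finset.sum_comm]
            exact Finset.sum_congr rfl fun g _ => by rw [Finset.mul_sum]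
        _ = (∑ g ∈ Gd, W g * ∑ n ∈ range N, toE (α g) ^ (n+1))
            + ∑ g ∈ Gn, W g * ∑ n ∈ range N, toE (α g) ^ (n+1) := by
            rw [hGd, hGn, Finset.sum_filter_add_sum_filter_not]
        _ = (N:ℝ) * D + ∑ g ∈ Gn, W g * ∑ n ∈ range N, toE (α g) ^ (n+1) := by
            congr 1
            have h1 : ∀ g ∈ Gd, W g * ∑ n ∈ range N, toE (α g) ^ (n+1) = W g * N := by
              intro g hg
              rw [hGd, Finset.mem_filter] at hg
              have hα0 : α g = 0 := by
                rw [hα]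
                refine Finset.sum_eq_zero fun p _ => ?_
                rw [hg.2 p]; ring
              rw [hα0, toE_zero]
              simp
            rw [Finset.sum_congr rfl h1, ← Finset.sum_mul, hDsum]
            push_cast; ring
    have hbound : ‖∑ g ∈ Gn, W g * ∑ n ∈ range N, toE (α g) ^ (n+1)‖ ≤ E := by
      refine le_trans (norm_sum_le _ _) ?_
      rw [hE]
      refine Finset.sum_le_sum fun g hg => ?_
      rw [norm_mul]
      exact mul_le_mul_of_nonneg_left
        (geom_bound (norm_toE _) (hnz g hg) N) (norm_nonneg _)
    have habs : |(∑ n ∈ range N, F (n+1)) - (N:ℝ) * D| ≤ E := by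
      have : (((∑ n ∈ range N, F (n+1)) - (N:ℝ) * D : ℝ) : ℂ)
          = ∑ g ∈ Gn, W g * ∑ n ∈ range N, toE (α g) ^ (n+1) := by
        push_cast [hsplit]; ring
      calc |(∑ n ∈ range N, F (n+1)) - (N:ℝ) * D|
          = ‖(((∑ n ∈ range N, F (n+1)) - (N:ℝ) * D : ℝ) : ℂ)‖ := by
            rw [Complex.norm_real]; rfl
        _ ≤ E := by rw [this]; exact hbound
    linarith [(abs_le.1 habs).1]
  -- lower bound on D
  have hDlb : (((m:ℝ)+1)⁻¹) ^ c ≤ D := by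
    have hnum : (∑ a ∈ Fintype.piFinset (fun _ : ι => range (m+1)),
        ∏ p : ι, (((m.choose (a p) : ℕ)) : ℝ)^2)
        = (∑ j ∈ range (m+1), (((m.choose j : ℕ)) : ℝ)^2)^c := by
      rw [← Finset.prod_univ_sum (fun _ : ι => range (m+1))
        (fun _ j => (((m.choose j : ℕ)) : ℝ)^2), Finset.prod_const, Finset.card_univ, ← hc]
    have hfact : D = ((∑ a ∈ range (m+1), (((m.choose a : ℕ)) : ℝ)^2) / 4^m)^c := by
      rw [hDdef, hnum, div_pow, ← pow_mul]
    have hcs : ((2:ℝ)^m)^2 ≤ ((m:ℝ)+1) * ∑ a ∈ range (m+1), (((m.choose a : ℕ)) : ℝ)^2 := by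
      have := sq_sum_le_card_mul_sum_sq (s := range (m+1))
        (f := fun a => (((m.choose a : ℕ)) : ℝ))
      rw [Finset.card_range] at this
      calc ((2:ℝ)^m)^2 = (∑ a ∈ range (m+1), (((m.choose a : ℕ)) : ℝ))^2 := by
            rw [← Nat.cast_sum, Nat.sum_range_choose]; push_cast; ring
        _ ≤ ((m:ℝ)+1) * ∑ a ∈ range (m+1), (((m.choose a : ℕ)) : ℝ)^2 := by
            push_cast at this ⊢; linarith
    have hm1 : (0:ℝ) < (m:ℝ) + 1 := by positivity
    have hpow4 : (0:ℝ) < 4^m := by positivity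
    have h4 : ((2:ℝ)^m)^2 = (4:ℝ)^m := by
      rw [← pow_mul, show (4:ℝ) = 2^2 by norm_num, ← pow_mul]; ring_nf
    have hper : ((m:ℝ)+1)⁻¹ ≤ (∑ a ∈ range (m+1), (((m.choose a : ℕ)) : ℝ)^2) / 4^m := by
      rw [le_div_iff₀ hpow4]
      calc ((m:ℝ)+1)⁻¹ * 4^m
          ≤ ((m:ℝ)+1)⁻¹ * (((m:ℝ)+1) * ∑ a ∈ range (m+1), (((m.choose a : ℕ)) : ℝ)^2) := by
            rw [← h4]
            exact mul_le_mul_of_nonneg_left hcs (by positivity)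
        _ = ∑ a ∈ range (m+1), (((m.choose a : ℕ)) : ℝ)^2 := by
            field_simp
    rw [hfact]
    exact pow_le_pow_left₀ (by positivity) hper c
  -- r^m < D
  have hrmD : r^m < D := by
    have h1 : r^m < (((m:ℝ)+1)⁻¹) ^ c := by
      have hp : (0:ℝ) < ((m:ℝ)+1)^c := by positivity
      rw [inv_pow, ← one_div, lt_div_iff₀ hp]
      nlinarith [hm]
    exact lt_of_lt_of_le h1 hDlb
  -- choose N
  have hdpos : 0 < D - r^m := by linarith
  set N : ℕ := ⌈E / (D - r^m)⌉₊ + 1 with hN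
  have hNlt : E < (N:ℝ) * (D - r^m) := by
    have h1 : E / (D - r^m) ≤ (⌈E / (D - r^m)⌉₊ : ℝ) := Nat.le_ceil _
    have h2 : (⌈E / (D - r^m)⌉₊ : ℝ) < (N:ℝ) := by rw [hN]; push_cast; linarith
    have := lt_of_le_of_lt h1 h2
    rw [div_lt_iff₀ hdpos] at this
    linarith
  -- extract a good n
  have hsum_lt : ∑ n ∈ range N, r^m < ∑ n ∈ range N, F (n+1) := by
    have h1 := key N
    have h2 : (N:ℝ) * r^m < (N:ℝ) * D - E := by nlinarith
    calc ∑ n ∈ range N, r^m = (N:ℝ) * r^m := by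
          rw [Finset.sum_const, Finset.card_range, nsmul_eq_mul]
      _ < (N:ℝ) * D - E := h2
      _ ≤ ∑ n ∈ range N, F (n+1) := h1
  obtain ⟨n, _, hn⟩ := Finset.exists_lt_of_sum_lt hsum_lt
  refine ⟨n + 1, Nat.succ_pos n, ?_⟩
  -- step F : conclude pointwise
  by_contra hcon
  push_neg at hcon
  obtain ⟨p₀, hp₀⟩ := hcon
  set f : ι → ℝ := fun q => (1 + s q * Real.cos (2*Real.pi*(((n+1:ℕ):ℝ) * x q)))/2 with hf
  have hf01 : ∀ q, 0 ≤ f q ∧ f q ≤ 1 := by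
    intro q
    have hcos1 := Real.cos_le_one (2*Real.pi*(((n+1:ℕ):ℝ) * x q))
    have hcos2 := Real.neg_one_le_cos (2*Real.pi*(((n+1:ℕ):ℝ) * x q))
    rcases hs q with h | h <;> constructor <;> rw [hf] <;> simp only [h] <;> nlinarith
  have hfp : f p₀ ≤ r := by
    rw [hf, hrdef]
    have : s p₀ * Real.cos (2*Real.pi*(((n+1:ℕ):ℝ) * x p₀)) ≤ 1 - ε := by
      push_cast
      push_cast at hp₀
      linarith
    linarith
  have hFle : F (n+1) ≤ r^m := by
    have hprod : F (n+1) = f p₀ ^ m * ∏ q ∈ univ.erase p₀, f q ^ m := by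
      rw [Finset.mul_prod_erase univ (fun q => f q ^ m) (Finset.mem_univ p₀)]
    rw [hprod]
    have h1 : f p₀ ^ m ≤ r ^ m := pow_le_pow_left₀ (hf01 p₀).1 hfp m
    have h2 : ∏ q ∈ univ.erase p₀, f q ^ m ≤ 1 :=
      Finset.prod_le_one (fun q _ => pow_nonneg (hf01 q).1 m)
        (fun q _ => pow_le_one₀ (hf01 q).1 (hf01 q).2)
    have h3 : (0:ℝ) ≤ ∏ q ∈ univ.erase p₀, f q ^ m :=
      Finset.prod_nonneg fun q _ => pow_nonneg (hf01 q).1 m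
    calc f p₀ ^ m * ∏ q ∈ univ.erase p₀, f q ^ m
        ≤ r ^ m * 1 := mul_le_mul h1 h2 h3 (pow_nonneg hr0.le m)
      _ = r ^ m := mul_one _
  exact absurd hn (not_lt.2 hFle)


/-- **Ergodic nulling for specular multipath channels.** Transmitter `j` reaches
receiver `i` through `L j` paths with angles of arrival `θ j ℓ`. If `1` together
with all the cosines `cos (θ j ℓ)` is linearly independent over `ℚ`, then for
every `δ > 0` there is a positive integer antenna separation `d` such that all
desired paths (from transmitter `i`) have gain above `1 - δ` while every path of
every interfering transmitter `j ≠ i` has gain below `δ`. -/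
theorem ergodic_nulling_multipath (K : ℕ) (hK : 1 ≤ K) (L : Fin K → ℕ)
    (θ : (j : Fin K) → Fin (L j) → ℝ)
    (hind : ∀ (q₀ : ℚ) (q : (j : Fin K) → Fin (L j) → ℚ),
      (q₀ : ℝ) + ∑ j, ∑ ℓ, (q j ℓ : ℝ) * Real.cos (θ j ℓ) = 0 →
        q₀ = 0 ∧ ∀ j ℓ, q j ℓ = 0)
    (i : Fin K) :
    ∀ δ : ℝ, 0 < δ → ∃ d : ℕ, 0 < d ∧
      (∀ ℓ : Fin (L i), arrayGain (θ i ℓ) d > 1 - δ) ∧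
      (∀ j : Fin K, j ≠ i → ∀ ℓ : Fin (L j), arrayGain (θ j ℓ) d < δ) := by
  intro δ hδ
  classical
  set x : ((j : Fin K) × Fin (L j)) → ℝ := fun p => Real.cos (θ p.1 p.2) with hx
  set s : ((j : Fin K) × Fin (L j)) → ℝ := fun p => if p.1 = i then 1 else -1 with hsdef
  have hs : ∀ p, s p = 1 ∨ s p = -1 := by
    intro p
    rw [hsdef]
    by_cases h : p.1 = i
    · left; simp [h]
    · right; simp [h]
  have hsig : ∀ (f : ((j : Fin K) × Fin (L j)) → ℝ),
      ∑ p, f p = ∑ j, ∑ ℓ, f ⟨j, ℓ⟩ := by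
    intro f
    rw [← Finset.univ_sigma_univ, Finset.sum_sigma]
  have hirr : ∀ c : ((j : Fin K) × Fin (L j)) → ℤ,
      (∃ k : ℤ, ∑ p, (c p : ℝ) * x p = (k:ℝ)) → ∀ p, c p = 0 := by
    rintro c ⟨k, hk⟩ p
    have hmain := hind (-(k:ℚ)) (fun j ℓ => (c ⟨j, ℓ⟩ : ℚ)) ?_
    · have h0 := hmain.2 p.1 p.2
      have : ((c p : ℚ)) = 0 := by
        have hp : (⟨p.1, p.2⟩ : (j : Fin K) × Fin (L j)) = p := rfl
        rw [← hp]; exact h0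
      exact_mod_cast this
    · have hsum : ∑ j, ∑ ℓ, (((c ⟨j, ℓ⟩ : ℚ)) : ℝ) * Real.cos (θ j ℓ)
          = ∑ p, (c p : ℝ) * x p := by
        rw [hsig (fun p => (c p : ℝ) * x p)]
        refine Finset.sum_congr rfl fun j _ => Finset.sum_congr rfl fun ℓ _ => ?_
        push_cast
        rw [hx]
      rw [hsum, hk]
      push_cast
      ring
  set ε : ℝ := min δ 1 / 2 with hε
  have hε0 : 0 < ε := by rw [hε]; positivity
  have hε1 : ε < 1 := by
    rw [hε]
    have : min δ 1 ≤ 1 := min_le_right _ _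
    linarith
  have hεδ : ε ≤ δ / 2 := by
    rw [hε]
    have : min δ 1 ≤ δ := min_le_left _ _
    linarith
  obtain ⟨d, hd, hgood⟩ := kronecker_signs x s hs hirr hε0 hε1
  refine ⟨d, hd, ?_, ?_⟩
  · intro ℓ
    have h := hgood ⟨i, ℓ⟩
    rw [hsdef] at h
    simp at h
    have harg : Real.cos (2 * Real.pi * (d:ℝ) * Real.cos (θ i ℓ))
        = Real.cos (2 * Real.pi * ((d:ℝ) * x ⟨i, ℓ⟩)) := by
      rw [hx, mul_assoc]
    rw [arrayGain, harg]
    linarith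
  · intro j hj ℓ
    have h := hgood ⟨j, ℓ⟩
    rw [hsdef] at h
    simp only [if_neg hj, neg_one_mul] at h
    have harg : Real.cos (2 * Real.pi * (d:ℝ) * Real.cos (θ j ℓ))
        = Real.cos (2 * Real.pi * ((d:ℝ) * x ⟨j, ℓ⟩)) := by
      rw [hx, mul_assoc]
    rw [arrayGain, harg]
    linarith
end
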